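/- arXiv:2109.10309 — 10 statements merged into one kernel-verified Lean document; each statement's English description precedes it below -/
import Mathlib

section
/- Let n ≥ 2, G = C_n ⊕ C_n, and let e₁, e₂, e₃ ∈ G. If the sequence S = e₁^{[n−1]}·e₂^{[n−1]}·e₃^{[n−1]} satisfies 0 ∉ Σ_{≤ n}(S), then ord(e₁) = ord(e₂) = ord(e₃) = n and each of the pairs (e₁, e₂), (e₁, e₃), (e₂, e₃) is a basis of G. -/
/-- `(e₁, e₂)` is a basis of the abelian group `G`, i.e. `G = ⟨e₁⟩ ⊕ ⟨e₂⟩`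
(internal direct sum of the cyclic subgroups generated by `e₁` and `e₂`). -/
def IsBasis {G : Type*} [AddCommGroup G] (e₁ e₂ : G) : Prop :=
  AddSubgroup.zmultiples e₁ ⊓ AddSubgroup.zmultiples e₂ = ⊥ ∧
  AddSubgroup.zmultiples e₁ ⊔ AddSubgroup.zmultiples e₂ = ⊤

section Aux

variable {n : ℕ}

/-- The pairwise zero-sum-free condition. -/
def PairH (n : ℕ) (x y : ZMod n × ZMod n) : Prop :=
  ∀ a b : ℕ, a ≤ n - 1 → b ≤ n - 1 → a + b ≤ n → a + b ≠ 0 → a • x + b • y ≠ 0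

lemma pairH_symm {x y : ZMod n × ZMod n} (H : PairH n x y) : PairH n y x := by
  intro a b ha hb hab hne
  rw [add_comm]
  exact H b a hb ha (by omega) (by omega)

lemma nsmul_self_eq_zero (z : ZMod n × ZMod n) : n • z = 0 := by
  have : (n : ZMod n) = 0 := ZMod.natCast_self n
  ext <;> simp [nsmul_eq_mul, this]

lemma exists_small (hn : 2 ≤ n) {x g : ZMod n × ZMod n}
    (hg : g ∈ AddSubgroup.zmultiples x) : ∃ a : ℕ, a < n ∧ a • x = g := by
  obtain ⟨k, rfl⟩ := AddSubgroup.mem_zmultiples_iff.mp hg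
  have hn0 : (0:ℤ) < (n:ℤ) := by exact_mod_cast (by omega : 0 < n)
  refine ⟨(k % (n:ℤ)).toNat, ?_, ?_⟩
  · have := Int.emod_lt_of_pos k hn0
    omega
  · have hnn : (0:ℤ) ≤ k % (n:ℤ) := Int.emod_nonneg k (by omega)
    have h1 : ((k % (n:ℤ)).toNat : ℤ) = k % (n:ℤ) := Int.toNat_of_nonneg hnn
    have h2 : k = (n:ℤ) * (k / n) + k % n := (Int.mul_ediv_add_emod k n).symm
    calc (k % (n:ℤ)).toNat • x = ((k % (n:ℤ)).toNat : ℤ) • x := (natCast_zsmul x _).symm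
      _ = (k % (n:ℤ)) • x := by rw [h1]
      _ = (k % (n:ℤ)) • x + (k / n) • ((n:ℤ) • x) := by
          rw [show (n:ℤ) • x = 0 by rw [natCast_zsmul]; exact nsmul_self_eq_zero x]
          simp
      _ = k • x := by rw [← mul_zsmul, ← mul_comm (n:ℤ), ← add_zsmul]; congr 1; omega

lemma ord_of (hn : 2 ≤ n) {x y : ZMod n × ZMod n} (H : PairH n x y) :
    addOrderOf x = n := by
  haveI : NeZero n := ⟨by omega⟩
  have hd : addOrderOf x ∣ n := addOrderOf_dvd_of_nsmul_eq_zero (nsmul_self_eq_zero x)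
  have hpos : 0 < addOrderOf x := addOrderOf_pos x
  by_contra h
  have hlt : addOrderOf x < n := lt_of_le_of_ne (Nat.le_of_dvd (by omega) hd) h
  have := H (addOrderOf x) 0 (by omega) (by omega) (by omega) (by omega)
  simp [addOrderOf_nsmul_eq_zero x] at this

lemma inf_bot (hn : 2 ≤ n) {x y : ZMod n × ZMod n} (H : PairH n x y) :
    AddSubgroup.zmultiples x ⊓ AddSubgroup.zmultiples y = ⊥ := by
  rw [eq_bot_iff]
  intro g hg
  simp only [AddSubgroup.mem_bot]
  by_contra hg0
  obtain ⟨a, halt, ha⟩ := exists_small hn hg.1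
  obtain ⟨b, hblt, hb⟩ := exists_small hn hg.2
  have ha0 : a ≠ 0 := by rintro rfl; simp at ha; exact hg0 ha.symm
  have hb0 : b ≠ 0 := by rintro rfl; simp at hb; exact hg0 hb.symm
  rcases le_total a b with hab | hab
  · refine H a (n - b) (by omega) (by omega) (by omega) (by omega) ?_
    rw [sub_nsmul y (by omega : b ≤ n), nsmul_self_eq_zero, ha, hb]
    simp
  · refine H (n - a) b (by omega) (by omega) (by omega) (by omega) ?_
    rw [sub_nsmul x (by omega : a ≤ n), nsmul_self_eq_zero, ha, hb]
    simp

lemma zmod_smul_eq (hn : 2 ≤ n) (c : ZMod n) (z : ZMod n × ZMod n) :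
    c • z = c.val • z := by
  haveI : NeZero n := ⟨by omega⟩
  rw [← Nat.cast_smul_eq_nsmul (ZMod n), ZMod.natCast_val, ZMod.cast_id]

lemma smul_eq_zero_iff' (hn : 2 ≤ n) {z : ZMod n × ZMod n} (hz : addOrderOf z = n)
    (c : ZMod n) : c • z = 0 ↔ c = 0 := by
  haveI : NeZero n := ⟨by omega⟩
  constructor
  · intro h
    have h1 : c.val • z = 0 := by rwa [← zmod_smul_eq hn]
    have h2 : n ∣ c.val := by have := addOrderOf_dvd_of_nsmul_eq_zero h1; rwa [hz] at this
    exact (ZMod.val_eq_zero c).mp (Nat.eq_zero_of_dvd_of_lt h2 c.val_lt)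
  · rintro rfl; simp

lemma sup_top (hn : 2 ≤ n) {x y : ZMod n × ZMod n}
    (hx : addOrderOf x = n) (hy : addOrderOf y = n)
    (hinf : AddSubgroup.zmultiples x ⊓ AddSubgroup.zmultiples y = ⊥) :
    AddSubgroup.zmultiples x ⊔ AddSubgroup.zmultiples y = ⊤ := by
  haveI : NeZero n := ⟨by omega⟩
  have hmemx : ∀ c : ZMod n, c • x ∈ AddSubgroup.zmultiples x := fun c => by
    rw [zmod_smul_eq hn]
    exact AddSubgroup.nsmul_mem _ (AddSubgroup.mem_zmultiples x) _
  have hmemy : ∀ c : ZMod n, c • y ∈ AddSubgroup.zmultiples y := fun c => by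
    rw [zmod_smul_eq hn]
    exact AddSubgroup.nsmul_mem _ (AddSubgroup.mem_zmultiples y) _
  have hinj : Function.Injective (fun p : ZMod n × ZMod n => p.1 • x + p.2 • y) := by
    intro p q h
    simp only at h
    have hw : (p.1 - q.1) • x = (q.2 - p.2) • y := by
      rw [sub_smul, sub_smul, sub_eq_sub_iff_add_eq_add, add_comm (q.2 • y)]
      exact h
    have hmem : (p.1 - q.1) • x ∈
        AddSubgroup.zmultiples x ⊓ AddSubgroup.zmultiples y := by
      refine ⟨hmemx _, ?_⟩
      rw [hw]; exact hmemy _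
    rw [hinf, AddSubgroup.mem_bot] at hmem
    have h1 : p.1 = q.1 := by
      have := (smul_eq_zero_iff' hn hx _).mp hmem
      rwa [sub_eq_zero] at this
    have h2 : p.2 = q.2 := by
      have := (smul_eq_zero_iff' hn hy _).mp (hw ▸ hmem)
      rw [sub_eq_zero] at this
      exact this.symm
    exact Prod.ext h1 h2
  have hsurj := Finite.injective_iff_surjective.mp hinj
  rw [AddSubgroup.eq_top_iff']
  intro g
  obtain ⟨p, hp⟩ := hsurj g
  rw [← hp]
  exact add_mem (AddSubgroup.mem_sup_left (hmemx _)) (AddSubgroup.mem_sup_right (hmemy _))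

end Aux

theorem stmt_5 (n : ℕ) (hn : 2 ≤ n) (e₁ e₂ e₃ : ZMod n × ZMod n)
    (hzs : ∀ T : Multiset (ZMod n × ZMod n),
      T ≤ Multiset.replicate (n - 1) e₁ + Multiset.replicate (n - 1) e₂ +
          Multiset.replicate (n - 1) e₃ →
      T ≠ 0 → Multiset.card T ≤ n → T.sum ≠ 0) :
    addOrderOf e₁ = n ∧ addOrderOf e₂ = n ∧ addOrderOf e₃ = n ∧
    IsBasis e₁ e₂ ∧ IsBasis e₁ e₃ ∧ IsBasis e₂ e₃ := by
  classical
  have key : ∀ x y : ZMod n × ZMod n,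
      (∀ c : ZMod n × ZMod n,
        (if e₁ = c then n - 1 else 0) + (if e₂ = c then n - 1 else 0) +
          (if e₃ = c then n - 1 else 0) ≥
        (if x = c then 1 else 0) * (n - 1) + (if y = c then 1 else 0) * (n - 1)) →
      PairH n x y := by
    intro x y hcount a b ha hb hab hne
    intro hsum
    refine hzs (Multiset.replicate a x + Multiset.replicate b y) ?_ ?_ ?_ ?_
    · rw [Multiset.le_iff_count]
      intro c
      have := hcount c
      simp only [Multiset.count_add, Multiset.count_replicate]
      split_ifs at this ⊢ <;> omega
    · intro h
      have := congrArg Multiset.card h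
      simp at this
      omega
    · simp; omega
    · simpa [Multiset.sum_replicate] using hsum
  have H12 : PairH n e₁ e₂ := key e₁ e₂ (by intro c; split_ifs <;> omega)
  have H13 : PairH n e₁ e₃ := key e₁ e₃ (by intro c; split_ifs <;> omega)
  have H23 : PairH n e₂ e₃ := key e₂ e₃ (by intro c; split_ifs <;> omega)
  have h1 : addOrderOf e₁ = n := ord_of hn H12
  have h2 : addOrderOf e₂ = n := ord_of hn H23
  have h3 : addOrderOf e₃ = n := ord_of hn (pairH_symm H13)
  have i12 := inf_bot hn H12
  have i13 := inf_bot hn H13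
  have i23 := inf_bot hn H23
  exact ⟨h1, h2, h3, ⟨i12, sup_top hn h1 h2 i12⟩, ⟨i13, sup_top hn h1 h3 i13⟩,
    ⟨i23, sup_top hn h2 h3 i23⟩⟩
end

section
/- Let n ≥ 2, G = C_n ⊕ C_n, let (e₁, e₂) be a basis of G, let x₁, x₂ ∈ [0, n−1], and let S = e₁^{[n−1]}·e₂^{[n−1]}·(x₁e₁+x₂e₂)^{[n−1]}. Then 0 ∉ Σ_{≤ n}(S) if and only if (−x₁k)_n + (−x₂k)_n + (k)_n > n for every integer k ∈ [1, n−1]. -/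
namespace Multiset

variable {α : Type*}

theorem exists_eq_add_of_le_add {s t u : Multiset α} (h : s ≤ t + u) :
    ∃ a b, a ≤ t ∧ b ≤ u ∧ s = a + b := by
  classical
  refine ⟨s ∩ t, s - t, inter_le_right, ?_, ?_⟩
  · rw [Multiset.sub_le_iff_le_add, add_comm]
    exact h
  · ext x
    simp only [count_add, count_inter, count_sub]
    omega

theorem le_replicate_add_replicate_add_replicate_iff {T : Multiset α} {u v w : α}
    {p q r : ℕ} :
    T ≤ replicate p u + replicate q v + replicate r w ↔
      ∃ a b c, a ≤ p ∧ b ≤ q ∧ c ≤ r ∧ T = replicate a u + replicate b v + replicate c w := by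
  constructor
  · intro h
    obtain ⟨T₁₂, T₃, h₁₂, h₃, rfl⟩ := exists_eq_add_of_le_add h
    obtain ⟨T₁, T₂, h₁, h₂, rfl⟩ := exists_eq_add_of_le_add h₁₂
    obtain ⟨a, ha, rfl⟩ := le_replicate_iff.mp h₁
    obtain ⟨b, hb, rfl⟩ := le_replicate_iff.mp h₂
    obtain ⟨c, hc, rfl⟩ := le_replicate_iff.mp h₃
    exact ⟨a, b, c, ha, hb, hc, rfl⟩
  · rintro ⟨a, b, c, ha, hb, hc, rfl⟩
    gcongr

theorem sum_replicate_add_replicate_add_replicate {G : Type*} [AddCommMonoid G]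
    (e₁ e₂ : G) (x₁ x₂ a b c : ℕ) :
    (replicate a e₁ + replicate b e₂ + replicate c (x₁ • e₁ + x₂ • e₂)).sum =
      (a + c * x₁) • e₁ + (b + c * x₂) • e₂ := by
  simp only [sum_add, sum_replicate, smul_add, add_nsmul, mul_smul]
  abel

end Multiset

namespace IsBasis

variable {G : Type*} [AddCommGroup G] {e₁ e₂ : G}

theorem nsmul_add_nsmul_eq_zero_iff (hb : IsBasis e₁ e₂) (a b : ℕ) :
    a • e₁ + b • e₂ = 0 ↔ a • e₁ = 0 ∧ b • e₂ = 0 := by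
  refine ⟨fun h => ?_, fun ⟨h₁, h₂⟩ => by rw [h₁, h₂, add_zero]⟩
  have h₁ : a • e₁ ∈ AddSubgroup.zmultiples e₁ ⊓ AddSubgroup.zmultiples e₂ := by
    refine ⟨AddSubgroup.nsmul_mem_zmultiples e₁ a, ?_⟩
    rw [eq_neg_of_add_eq_zero_left h]
    exact (AddSubgroup.zmultiples e₂).neg_mem (AddSubgroup.nsmul_mem_zmultiples e₂ b)
  rw [hb.1, AddSubgroup.mem_bot] at h₁
  exact ⟨h₁, by rwa [h₁, zero_add] at h⟩

theorem card_le_mul_addOrderOf [Finite G] (hb : IsBasis e₁ e₂) :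
    Nat.card G ≤ addOrderOf e₁ * addOrderOf e₂ := by
  have hsurj : Function.Surjective
      (fun p : AddSubgroup.zmultiples e₁ × AddSubgroup.zmultiples e₂ => (p.1 : G) + p.2) := by
    intro x
    obtain ⟨y, hy, z, hz, hyz⟩ := AddSubgroup.mem_sup.mp (hb.2 ▸ AddSubgroup.mem_top x)
    exact ⟨(⟨y, hy⟩, ⟨z, hz⟩), hyz⟩
  simpa only [Nat.card_prod, Nat.card_zmultiples] using Nat.card_le_card_of_surjective _ hsurj

variable {n : ℕ} [NeZero n] {e₁ e₂ : ZMod n × ZMod n}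

theorem addOrderOf_eq (hb : IsBasis e₁ e₂) : addOrderOf e₁ = n ∧ addOrderOf e₂ = n := by
  have hdvd (e : ZMod n × ZMod n) : addOrderOf e ∣ n :=
    addOrderOf_dvd_of_nsmul_eq_zero (by simp [Prod.ext_iff])
  have hle₁ := Nat.le_of_dvd (NeZero.pos n) (hdvd e₁)
  have hle₂ := Nat.le_of_dvd (NeZero.pos n) (hdvd e₂)
  have hcard := hb.card_le_mul_addOrderOf
  rw [Nat.card_prod, Nat.card_zmod] at hcard
  constructor <;> nlinarith

theorem nsmul_add_nsmul_eq_zero_iff_dvd (hb : IsBasis e₁ e₂) (a b : ℕ) :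
    a • e₁ + b • e₂ = 0 ↔ n ∣ a ∧ n ∣ b := by
  rw [hb.nsmul_add_nsmul_eq_zero_iff, ← addOrderOf_dvd_iff_nsmul_eq_zero,
    ← addOrderOf_dvd_iff_nsmul_eq_zero, hb.addOrderOf_eq.1, hb.addOrderOf_eq.2]

end IsBasis

theorem Int.dvd_add_iff_neg_emod_eq {n a m : ℤ} (ha : 0 ≤ a) (han : a < n) :
    n ∣ a + m ↔ -m % n = a := by
  rw [← Int.emod_eq_of_lt ha han, ← Int.ModEq, Int.modEq_iff_dvd, Int.emod_eq_of_lt ha han,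
    sub_neg_eq_add]

theorem forall_not_dvd_iff_forall_emod_gt (n x₁ x₂ : ℕ) :
    (∀ a b c : ℕ, a ≤ n - 1 → b ≤ n - 1 → c ≤ n - 1 → a + b + c ≠ 0 → a + b + c ≤ n →
        ¬(n ∣ a + c * x₁ ∧ n ∣ b + c * x₂)) ↔
    (∀ k : ℕ, 1 ≤ k → k ≤ n - 1 →
      ((-(x₁ : ℤ) * k) % n) + ((-(x₂ : ℤ) * k) % n) + ((k : ℤ) % n) > n) := by
  have hdvd {a c x : ℕ} (ha : a ≤ n - 1) (hc : 1 ≤ c) (hcn : c ≤ n - 1) :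
      n ∣ a + c * x ↔ (-(x : ℤ) * c) % n = a := by
    rw [← Int.natCast_dvd_natCast, Nat.cast_add, Nat.cast_mul,
      Int.dvd_add_iff_neg_emod_eq (by positivity) (by omega), neg_mul, mul_comm (x : ℤ)]
  constructor
  · intro h k hk hkn
    have hn : (0 : ℤ) < n := by omega
    have hkmod : (k : ℤ) % n = k := Int.emod_eq_of_lt (by positivity) (by omega)
    set A := (-(x₁ : ℤ) * k) % n
    set B := (-(x₂ : ℤ) * k) % n
    have hA : 0 ≤ A ∧ A < n := ⟨Int.emod_nonneg _ hn.ne', Int.emod_lt_of_pos _ hn⟩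
    have hB : 0 ≤ B ∧ B < n := ⟨Int.emod_nonneg _ hn.ne', Int.emod_lt_of_pos _ hn⟩
    by_contra! hle
    refine h A.toNat B.toNat k (by omega) (by omega) hkn (by omega) (by omega) ⟨?_, ?_⟩
    · rw [hdvd (by omega) hk hkn]; omega
    · rw [hdvd (by omega) hk hkn]; omega
  · rintro h a b c ha hb hc hne hle ⟨hda, hdb⟩
    rcases Nat.eq_zero_or_pos c with rfl | hc₀
    · simp only [zero_mul, add_zero] at hda hdb
      have ha₀ := Nat.eq_zero_of_dvd_of_lt hda (by omega)
      have hb₀ := Nat.eq_zero_of_dvd_of_lt hdb (by omega)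
      omega
    · have hcmod : (c : ℤ) % n = c := Int.emod_eq_of_lt (by positivity) (by omega)
      have hgt := h c hc₀ hc
      rw [(hdvd ha hc₀ hc).1 hda, (hdvd hb hc₀ hc).1 hdb, hcmod] at hgt
      omega

theorem stmt_6_general (n : ℕ) (e₁ e₂ : ZMod n × ZMod n)
    (hbasis : IsBasis e₁ e₂) (x₁ x₂ : ℕ)
    (S : Multiset (ZMod n × ZMod n))
    (hSdef : S = Multiset.replicate (n - 1) e₁ + Multiset.replicate (n - 1) e₂ +
        Multiset.replicate (n - 1) (x₁ • e₁ + x₂ • e₂)) :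
    (∀ T : Multiset (ZMod n × ZMod n), T ≤ S → T ≠ 0 →
        Multiset.card T ≤ n → T.sum ≠ 0) ↔
    (∀ k : ℕ, 1 ≤ k → k ≤ n - 1 →
      ((-(x₁ : ℤ) * k) % n) + ((-(x₂ : ℤ) * k) % n) + ((k : ℤ) % n) > n) := by
  rcases eq_or_ne n 0 with rfl | hn
  · refine iff_of_true (fun T hT hne _ => absurd ?_ hne) (fun k hk hk0 => by omega)
    simpa [hSdef] using hT
  have : NeZero n := ⟨hn⟩
  have hsum (a b c : ℕ) : (Multiset.replicate a e₁ + Multiset.replicate b e₂ +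
      Multiset.replicate c (x₁ • e₁ + x₂ • e₂)).sum = 0 ↔ n ∣ a + c * x₁ ∧ n ∣ b + c * x₂ := by
    rw [Multiset.sum_replicate_add_replicate_add_replicate, hbasis.nsmul_add_nsmul_eq_zero_iff_dvd]
  rw [← forall_not_dvd_iff_forall_emod_gt, hSdef]
  constructor
  · intro h a b c ha hb hc hne hle hdvd
    refine h _ (Multiset.le_replicate_add_replicate_add_replicate_iff.2
      ⟨a, b, c, ha, hb, hc, rfl⟩) ?_ (by simpa using hle) ((hsum a b c).2 hdvd)
    simpa [← Multiset.card_eq_zero] using hne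
  · intro h T hT hne hcard hzero
    obtain ⟨a, b, c, ha, hb, hc, rfl⟩ :=
      Multiset.le_replicate_add_replicate_add_replicate_iff.1 hT
    refine h a b c ha hb hc ?_ (by simpa using hcard) ((hsum a b c).1 hzero)
    simpa [← Multiset.card_eq_zero] using hne

theorem stmt_6 (n : ℕ) (hn : 2 ≤ n) (e₁ e₂ : ZMod n × ZMod n)
    (hbasis : IsBasis e₁ e₂) (x₁ x₂ : ℕ) (hx₁ : x₁ ≤ n - 1) (hx₂ : x₂ ≤ n - 1)
    (S : Multiset (ZMod n × ZMod n))
    (hSdef : S = Multiset.replicate (n - 1) e₁ + Multiset.replicate (n - 1) e₂ +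
        Multiset.replicate (n - 1) (x₁ • e₁ + x₂ • e₂)) :
    (∀ T : Multiset (ZMod n × ZMod n), T ≤ S → T ≠ 0 →
        Multiset.card T ≤ n → T.sum ≠ 0) ↔
    (∀ k : ℕ, 1 ≤ k → k ≤ n - 1 →
      ((-(x₁ : ℤ) * k) % n) + ((-(x₂ : ℤ) * k) % n) + ((k : ℤ) % n) > n) :=
  stmt_6_general n e₁ e₂ hbasis x₁ x₂ S hSdef
end

section
/- Let n ≥ 2 and let x₁, x₂, x₃ ∈ ℤ with x₁ + x₂ + x₃ ≡ 0 (mod n). Then there exists an integer k ∈ [1, n−1] with gcd(k, n) = 1 such that (k·x₁)_n + (k·x₂)_n + (k·x₃)_n ≤ n. -/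
/-! The residues of `x₁, x₂, x₃` sum to a multiple of `n` below `3n`. If that sum is at most `n`,
`k = 1` works; otherwise it is `2n`, no residue vanishes, and `k = n - 1 ≡ -1` sends each residue
`r` to `n - r`, so the new residues sum to `3n - 2n = n`. -/

theorem Int.emod_add_emod_add_emod_le_or_eq_two_mul {n a b c : ℤ} (hn : 0 < n)
    (h : n ∣ a + b + c) : a % n + b % n + c % n ≤ n ∨ a % n + b % n + c % n = 2 * n := by
  have hdvd : n ∣ a % n + b % n + c % n := by
    have hsplit : a % n + b % n + c % n = a + b + c - n * (a / n + b / n + c / n) := by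
      rw [Int.emod_def, Int.emod_def, Int.emod_def]; ring
    exact hsplit ▸ dvd_sub h (dvd_mul_right _ _)
  obtain ⟨m, hm⟩ := hdvd
  have ha := Int.emod_lt_of_pos a hn
  have hb := Int.emod_lt_of_pos b hn
  have hc := Int.emod_lt_of_pos c hn
  have hm0 : 0 ≤ m := by
    have := add_nonneg (add_nonneg (Int.emod_nonneg a hn.ne') (Int.emod_nonneg b hn.ne'))
      (Int.emod_nonneg c hn.ne')
    nlinarith
  have hm3 : m < 3 := by nlinarith
  interval_cases m <;> omega

theorem Int.sub_one_mul_emod_of_emod_ne_zero {n : ℤ} (x : ℤ) (hn : 0 ≤ n) (hx : x % n ≠ 0) :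
    (n - 1) * x % n = n - x % n := by
  rw [show (n - 1) * x = -x + x * n by ring, Int.add_mul_emod_self_right, Int.neg_emod,
    if_neg (mt Int.emod_eq_zero_of_dvd hx), Int.natAbs_of_nonneg hn]

theorem stmt_7 (n : ℕ) (hn : 2 ≤ n) (x₁ x₂ x₃ : ℤ)
    (hsum : (n : ℤ) ∣ (x₁ + x₂ + x₃)) :
    ∃ k : ℕ, 1 ≤ k ∧ k ≤ n - 1 ∧ Nat.gcd k n = 1 ∧
      ((k : ℤ) * x₁) % n + ((k : ℤ) * x₂) % n + ((k : ℤ) * x₃) % n ≤ n := by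
  have hn' : (0 : ℤ) < n := by omega
  rcases Int.emod_add_emod_add_emod_le_or_eq_two_mul hn' hsum with hle | htwo
  · exact ⟨1, le_rfl, by omega, Nat.gcd_one_left n, by simpa using hle⟩
  · have h₁ := Int.emod_lt_of_pos x₁ hn'
    have h₂ := Int.emod_lt_of_pos x₂ hn'
    have h₃ := Int.emod_lt_of_pos x₃ hn'
    refine ⟨n - 1, by omega, le_rfl,
      (Nat.coprime_self_sub_left (by omega)).2 (Nat.coprime_one_left n), ?_⟩
    rw [Nat.cast_sub (by omega), Nat.cast_one,
      Int.sub_one_mul_emod_of_emod_ne_zero x₁ hn'.le (by omega),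
      Int.sub_one_mul_emod_of_emod_ne_zero x₂ hn'.le (by omega),
      Int.sub_one_mul_emod_of_emod_ne_zero x₃ hn'.le (by omega)]
    omega
end

section
/- Let n ≥ 2 and let x ∈ [1, n−1] with gcd(x, n) = 1. Then the integer interval [2, n−1] is the disjoint union of X(x) and X(n−x); that is, every u ∈ [2, n−1] lies in exactly one of X(x) and X(n−x). -/
/-- For `n ≥ 2` and `x ∈ [1, n-1]` with `gcd(x, n) = 1`,
`X n x = {⌈tn/x⌉ : t ∈ [1, x-1]}`. -/
def X (n x : ℕ) : Finset ℤ :=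
  (Finset.Icc 1 (x - 1)).image fun t : ℕ => ⌈(t * n : ℚ) / x⌉

lemma X_subset {n x : ℕ} (hn : 2 ≤ n) (hx2 : x ≤ n - 1) :
    X n x ⊆ Finset.Icc (2 : ℤ) ((n : ℤ) - 1) := by
  intro u hu
  obtain ⟨t, ht, rfl⟩ := Finset.mem_image.mp hu
  simp only [Finset.mem_Icc] at ht ⊢
  have hx1 : 1 ≤ x := by omega
  have hxn : x + 1 ≤ n := by omega
  have hx0 : (0 : ℚ) < x := by exact_mod_cast hx1
  have ht1 : 1 ≤ t := ht.1
  have ht2 : (t : ℤ) ≤ (x : ℤ) - 1 := by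
    have := ht.2; omega
  constructor
  · rw [show (2:ℤ) = 1 + 1 by ring, Int.add_one_le_iff, Int.lt_ceil]
    rw [lt_div_iff₀ hx0]
    have : (x : ℤ) < t * n := by nlinarith [ht1, hxn]
    have h' : ((x:ℤ):ℚ) < ((t*n : ℤ) : ℚ) := by exact_mod_cast this
    push_cast at h' ⊢
    linarith
  · rw [Int.ceil_le, div_le_iff₀ hx0]
    have : (t : ℤ) * n ≤ ((n : ℤ) - 1) * x := by nlinarith [ht2, hxn]
    exact_mod_cast (by exact_mod_cast this : (((t:ℤ)*n : ℤ) : ℚ) ≤ (((n:ℤ)-1)*x : ℤ))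

lemma mem_X_iff {n x : ℕ} (hn : 2 ≤ n) (hx1 : 1 ≤ x) (hx2 : x ≤ n - 1)
    (hgcd : Nat.gcd x n = 1) {u : ℤ} (hu1 : 2 ≤ u) (hu2 : u ≤ (n : ℤ) - 1) :
    u ∈ X n x ↔ (1 ≤ u * x % n ∧ u * x % n ≤ (x : ℤ) - 1) := by
  have hx0 : (0 : ℚ) < x := by exact_mod_cast hx1
  have hn0 : (0 : ℤ) < n := by exact_mod_cast (by omega : 0 < n)
  have hxn : (x : ℤ) + 1 ≤ n := by
    have : x + 1 ≤ n := by omega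
    exact_mod_cast this
  have hcop : IsCoprime (x : ℤ) (n : ℤ) := by
    rw [Int.isCoprime_iff_gcd_eq_one]
    exact_mod_cast hgcd
  constructor
  · intro hu
    obtain ⟨t, ht, heq⟩ := Finset.mem_image.mp hu
    simp only [Finset.mem_Icc] at ht
    have h1 : (u : ℚ) - 1 < (t * n : ℚ) / x := by
      rw [← heq]; linarith [Int.ceil_lt_add_one ((t * n : ℚ) / x)]
    have h2 : (t * n : ℚ) / x ≤ u := by rw [← heq]; exact Int.le_ceil _
    rw [div_le_iff₀ hx0] at h2
    rw [lt_div_iff₀ hx0] at h1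
    have h1' : (u - 1) * x < (t : ℤ) * n := by exact_mod_cast h1
    have h2' : (t : ℤ) * n ≤ u * x := by exact_mod_cast h2
    have hne : (t : ℤ) * n ≠ u * x := by
      intro h
      have hdvd : (n : ℤ) ∣ u * x := ⟨t, by linarith⟩
      have : (n : ℤ) ∣ u := (hcop.symm.dvd_of_dvd_mul_right) hdvd
      have := Int.le_of_dvd (by omega) this
      omega
    set r : ℤ := u * x - t * n with hr
    have hr1 : 1 ≤ r := by omega
    have hr2 : r ≤ (x : ℤ) - 1 := by nlinarith
    have : u * x % n = r := by
      have : u * x = r + n * t := by rw [hr]; ring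
      rw [this, Int.add_mul_emod_self_left, Int.emod_eq_of_lt (by omega) (by omega)]
    rw [this]; exact ⟨hr1, hr2⟩
  · rintro ⟨hr1, hr2⟩
    set r : ℤ := u * x % n with hrdef
    set q : ℤ := u * x / n with hqdef
    have hqr : u * x = r + n * q := by
      rw [hrdef, hqdef]; linarith [Int.emod_add_mul_ediv (u * x) n]
    have hq1 : 1 ≤ q := by nlinarith
    have hq2 : q ≤ (x : ℤ) - 1 := by nlinarith
    refine Finset.mem_image.mpr ⟨q.toNat, ?_, ?_⟩
    · simp only [Finset.mem_Icc]
      omega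
    · have hcast : ((q.toNat : ℕ) : ℚ) = (q : ℚ) := by
        exact_mod_cast Int.toNat_of_nonneg (by omega)
      rw [Int.ceil_eq_iff]
      constructor
      · rw [lt_div_iff₀ hx0, hcast]
        have : (u - 1) * x < q * n := by nlinarith
        exact_mod_cast (by exact_mod_cast this : (((u-1)*x : ℤ) : ℚ) < ((q*n : ℤ) : ℚ))
      · rw [div_le_iff₀ hx0, hcast]
        have : q * n ≤ u * x := by nlinarith
        exact_mod_cast (by exact_mod_cast this : ((q*n : ℤ) : ℚ) ≤ ((u*x : ℤ) : ℚ))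

lemma emod_compl {n x : ℕ} (hn : 2 ≤ n) (hx : x ≤ n) (u : ℤ) :
    u * ((n - x : ℕ) : ℤ) % n = ((n : ℤ) - u * x % n) % n := by
  have hc : ((n - x : ℕ) : ℤ) = (n : ℤ) - x := by
    have := hx; push_cast [this]; ring
  have hn0 : (0 : ℤ) < n := by exact_mod_cast (by omega : 0 < n)
  set r : ℤ := u * x % n with hrdef
  set q : ℤ := u * x / n with hqdef
  have hqr : u * x = r + n * q := by
    rw [hrdef, hqdef]; linarith [Int.emod_add_mul_ediv (u * x) n]
  have : u * ((n : ℤ) - x) = ((n : ℤ) - r) + n * (u - q - 1) := by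
    rw [show u * ((n:ℤ) - x) = u * n - u * x by ring, hqr]; ring
  rw [hc, this, Int.add_mul_emod_self_left]

theorem stmt_10 (n x : ℕ) (hn : 2 ≤ n) (hx1 : 1 ≤ x) (hx2 : x ≤ n - 1)
    (hgcd : Nat.gcd x n = 1) :
    X n x ∪ X n (n - x) = Finset.Icc (2 : ℤ) ((n : ℤ) - 1) ∧
    Disjoint (X n x) (X n (n - x)) := by
  have hy1 : 1 ≤ n - x := by omega
  have hy2 : n - x ≤ n - 1 := by omega
  have hcastnx : ((n - x : ℕ) : ℤ) = (n : ℤ) - x := by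
    push_cast [show x ≤ n by omega]; ring
  have hgcd' : Nat.gcd (n - x) n = 1 := by
    have hc : IsCoprime (x : ℤ) (n : ℤ) := by
      rw [Int.isCoprime_iff_gcd_eq_one]; exact_mod_cast hgcd
    have h2 : IsCoprime ((n : ℤ) - x) (n : ℤ) := by
      have := (hc.neg_left).add_mul_left_left 1
      simpa [sub_eq_neg_add, mul_one] using this
    rw [← hcastnx] at h2
    have := Int.isCoprime_iff_gcd_eq_one.mp h2
    simpa [Int.gcd_natCast_natCast] using this
  have hn0 : (0 : ℤ) < n := by exact_mod_cast (by omega : 0 < n)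
  -- key facts about r for u in range
  have key : ∀ u : ℤ, 2 ≤ u → u ≤ (n : ℤ) - 1 →
      1 ≤ u * x % n ∧ u * x % n ≤ (n : ℤ) - 1 ∧ u * x % n ≠ (x : ℤ) := by
    intro u hu1 hu2
    have hcop : IsCoprime (x : ℤ) (n : ℤ) := by
      rw [Int.isCoprime_iff_gcd_eq_one]; exact_mod_cast hgcd
    have hlt := Int.emod_lt_of_pos (u * x) hn0
    have hge := Int.emod_nonneg (u * x) (show (n:ℤ) ≠ 0 by omega)
    refine ⟨?_, by omega, ?_⟩
    · rcases (by omega : 1 ≤ u * x % n ∨ u * x % n = 0) with h | h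
      · exact h
      · exfalso
        have hdvd : (n : ℤ) ∣ u * x := Int.dvd_of_emod_eq_zero h
        have : (n : ℤ) ∣ u := (hcop.symm.dvd_of_dvd_mul_right) hdvd
        have := Int.le_of_dvd (by omega) this
        omega
    · intro h
      have hdvd : (n : ℤ) ∣ (u - 1) * x := by
        have hxmod : (x : ℤ) % n = x := by
          apply Int.emod_eq_of_lt (by omega)
          exact_mod_cast (by omega : x < n)
        have h0 : (u * x - x) % n = 0 := by
          rw [Int.sub_emod, h, hxmod, sub_self, Int.zero_emod]
        have := Int.dvd_of_emod_eq_zero h0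
        convert this using 1; ring
      have : (n : ℤ) ∣ (u - 1) := (hcop.symm.dvd_of_dvd_mul_right) hdvd
      have := Int.le_of_dvd (by omega) this
      omega
  have compl : ∀ u : ℤ, 2 ≤ u → u ≤ (n : ℤ) - 1 →
      u * ((n - x : ℕ) : ℤ) % n = (n : ℤ) - u * x % n := by
    intro u hu1 hu2
    obtain ⟨h1, h2, _⟩ := key u hu1 hu2
    rw [emod_compl hn (by omega) u]
    exact Int.emod_eq_of_lt (by omega) (by omega)
  constructor
  · apply Finset.Subset.antisymm
    · intro u hu
      rcases Finset.mem_union.mp hu with h | h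
      · exact X_subset hn hx2 h
      · exact X_subset hn hy2 h
    · intro u hu
      simp only [Finset.mem_Icc] at hu
      obtain ⟨hu1, hu2⟩ := hu
      obtain ⟨h1, h2, h3⟩ := key u hu1 hu2
      rw [Finset.mem_union, mem_X_iff hn hx1 hx2 hgcd hu1 hu2,
        mem_X_iff hn hy1 hy2 hgcd' hu1 hu2, compl u hu1 hu2, hcastnx]
      have hxlt : (x : ℤ) ≤ (n : ℤ) - 1 := by omega
      omega
  · rw [Finset.disjoint_left]
    intro u hux huy
    have hmem := X_subset hn hx2 hux
    simp only [Finset.mem_Icc] at hmem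
    obtain ⟨hu1, hu2⟩ := hmem
    rw [mem_X_iff hn hx1 hx2 hgcd hu1 hu2] at hux
    rw [mem_X_iff hn hy1 hy2 hgcd' hu1 hu2, compl u hu1 hu2, hcastnx] at huy
    omega
end

section
/- Let n ≥ 2, let x ∈ [1, n−1] with gcd(x, n) = 1, and for an integer u define Δ(u, x) = (ux)_n − ((u−1)x)_n. Then for every u ∈ [1, n−1], Δ(u, x) ∈ {x, x−n}, and moreover u ∈ X(x) if and only if Δ(u, x) = x−n. -/
theorem stmt_11 (n x : ℕ) (hn : 2 ≤ n) (hx1 : 1 ≤ x) (hx2 : x ≤ n - 1)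
    (hgcd : Nat.gcd x n = 1) :
    ∀ u : ℤ, 1 ≤ u → u ≤ (n : ℤ) - 1 →
      ((u * x) % n - ((u - 1) * x) % n = (x : ℤ) ∨
        (u * x) % n - ((u - 1) * x) % n = (x : ℤ) - n) ∧
      (u ∈ X n x ↔ (u * x) % n - ((u - 1) * x) % n = (x : ℤ) - n) := by
  intro u hu1 hu2
  have hnpos : (0 : ℤ) < n := by exact_mod_cast Nat.lt_of_lt_of_le Nat.zero_lt_two hn
  have hxpos : (0 : ℤ) < x := by exact_mod_cast hx1
  have hxn : (x : ℤ) ≤ (n : ℤ) - 1 := by omega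
  set r : ℤ := (u * x) % n with hr
  set s : ℤ := ((u - 1) * x) % n with hs
  have hr0 : 0 ≤ r := Int.emod_nonneg _ (by omega)
  have hrn : r < n := Int.emod_lt_of_pos _ hnpos
  have hs0 : 0 ≤ s := Int.emod_nonneg _ (by omega)
  have hsn : s < n := Int.emod_lt_of_pos _ hnpos
  -- r - s ≡ x mod n
  have h1 : r ≡ u * x [ZMOD n] := Int.emod_emod_of_dvd _ dvd_rfl
  have h2 : s ≡ (u - 1) * x [ZMOD n] := Int.emod_emod_of_dvd _ dvd_rfl
  have h3 : r - s ≡ x [ZMOD n] := by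
    have := h1.sub h2
    have he : u * x - (u - 1) * x = (x : ℤ) := by ring
    rwa [he] at this
  obtain ⟨k, hk⟩ : (n : ℤ) ∣ (x - (r - s)) := h3.dvd
  have hk1 : -1 < k := by nlinarith
  have hk2 : k < 2 := by nlinarith
  have hcases : r - s = (x : ℤ) ∨ r - s = (x : ℤ) - n := by
    interval_cases k <;> omega
  refine ⟨hcases, ?_⟩
  have hkey : (r - s = (x : ℤ) - n) ↔ r < x := by
    constructor
    · intro h; omega
    · intro h; rcases hcases with h' | h' <;> omega
  rw [hkey]
  have hrne : r ≠ 0 := by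
    intro h0
    have hdvd : (n : ℤ) ∣ u * x := Int.dvd_of_emod_eq_zero h0
    have hcop : IsCoprime (n : ℤ) (x : ℤ) := by
      rw [Int.isCoprime_iff_gcd_eq_one]
      simpa [Int.gcd, Nat.gcd_comm] using hgcd
    have hu : (n : ℤ) ∣ u := hcop.dvd_of_dvd_mul_right hdvd
    have := Int.le_of_dvd (by omega) hu
    omega
  have hxQ : (0 : ℚ) < (x : ℚ) := by exact_mod_cast hxpos
  simp only [X, Finset.mem_image, Finset.mem_Icc]
  constructor
  · rintro ⟨t, ⟨ht1, ht2⟩, hceil⟩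
    have htx : (t : ℤ) ≤ (x : ℤ) - 1 := by omega
    have ht1' : (1 : ℤ) ≤ (t : ℤ) := by exact_mod_cast ht1
    rw [Int.ceil_eq_iff] at hceil
    obtain ⟨hlo, hhi⟩ := hceil
    rw [div_le_iff₀ hxQ] at hhi
    rw [lt_div_iff₀ hxQ] at hlo
    have ha : (t : ℤ) * n ≤ u * x := by exact_mod_cast hhi
    have hb : u * x - x < (t : ℤ) * n := by
      have : ((u : ℚ) - 1) * x < (t : ℚ) * n := hlo
      have h' : (u - 1) * (x : ℤ) < (t : ℤ) * n := by exact_mod_cast this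
      nlinarith
    have heq : (u * x - t * n) % n = r := by
      rw [hr, Int.sub_emod, Int.mul_emod_left]
      simp [Int.emod_emod_of_dvd]
    have hlt : (u * x - (t : ℤ) * n) % n = u * x - (t : ℤ) * n :=
      Int.emod_eq_of_lt (by omega) (by omega)
    omega
  · intro hrx
    set t : ℤ := u * x / n with htdef
    have hdm : n * t + r = u * x := Int.mul_ediv_add_emod _ _
    have hux1 : (x : ℤ) ≤ u * x := le_mul_of_one_le_left (le_of_lt hxpos) hu1
    have hux2 : u * x ≤ ((n : ℤ) - 1) * x :=
      mul_le_mul_of_nonneg_right hu2 (le_of_lt hxpos)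
    have he2 : ((n : ℤ) - 1) * x = n * x - x := by ring
    have ht1 : 1 ≤ t := by
      by_contra h
      push_neg at h
      have : (n : ℤ) * t ≤ 0 :=
        mul_nonpos_of_nonneg_of_nonpos (le_of_lt hnpos) (by omega)
      linarith
    have htx : t < x := by
      by_contra h
      push_neg at h
      have : (n : ℤ) * x ≤ n * t := mul_le_mul_of_nonneg_left h (le_of_lt hnpos)
      linarith
    have hm : ((t.toNat : ℕ) : ℤ) = t := Int.toNat_of_nonneg (by omega)
    refine ⟨t.toNat, ⟨by omega, by omega⟩, ?_⟩
    have he3 : (u - 1) * (x : ℤ) = u * x - x := by ring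
    have hI1 : (u - 1) * (x : ℤ) < ((t.toNat : ℕ) : ℤ) * n := by
      rw [hm, mul_comm]; linarith
    have hI2 : ((t.toNat : ℕ) : ℤ) * n ≤ u * x := by
      rw [hm, mul_comm]; linarith
    rw [Int.ceil_eq_iff]
    constructor
    · rw [lt_div_iff₀ hxQ]
      exact_mod_cast hI1
    · rw [div_le_iff₀ hxQ]
      exact_mod_cast hI2
end

section
/- Let n ≥ 2 and let x₁, x₂, x₃ ∈ ℤ with gcd(xᵢ, n) = 1 for all i ∈ {1, 2, 3}. If (k·x₁)_n + (k·x₂)_n + (k·x₃)_n > n for every integer k ∈ [1, n−1], then xᵢ + xⱼ ≡ 0 (mod n) for some distinct i, j ∈ {1, 2, 3}. -/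
/-!
Write `f(k) = Σ (k xᵢ)_n`. As `(k x)_n + ((n - k) x)_n = n` for `x` prime to `n`, we get
`f(k) + f(n - k) = 3n`, so `n < f(k) < 2n` forces `f(k) = n + (k s)_n` with `s = x₁ + x₂ + x₃`;
in particular `s` is a unit mod `n`. Replacing `xᵢ` by `yᵢ = (s⁻¹ xᵢ)_n` only permutes the `k`, so
`Σ (k yᵢ)_n = n + k` for all `k`, and it suffices to show that some `yᵢ = 1`.

At `k = 2` some `yᵢ`, say `y₃`, is `≥ n / 2`. With `m = n - y₃ = y₁ + y₂ - 1` the identity reads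
`(k y₁)_n + (k y₂)_n = (k m)_n + k`, so whenever `(k y₂)_n` wraps around `n` so does `(k m)_n`.
For `k ≡ c / y₂` with `0 < c < y₂` this gives `(σ c)_n < m`, where `σ = (m / y₂)_n`; since
`2m ≤ n` these residues never wrap, hence `σ y₂ = m = y₁ + y₂ - 1`, and `y₁ ≤ y₂` forces
`σ = 1`, `y₁ = 1`.
-/

section Residues

variable {n : ℤ}

lemma not_dvd_mul_of_isCoprime {x k : ℤ} (hx : IsCoprime x n) (hk : 0 < k) (hkn : k < n) :
    ¬ n ∣ k * x := fun h => (Int.le_of_dvd hk (hx.symm.dvd_of_dvd_mul_right h)).not_gt hkn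

lemma isCoprime_emod {x : ℤ} (hx : IsCoprime x n) : IsCoprime (x % n) n :=
  Int.isCoprime_iff_gcd_eq_one.mpr
    ((Int.gcd_emod _ _).trans (Int.isCoprime_iff_gcd_eq_one.mp hx))

lemma emod_pos_of_isCoprime {x : ℤ} (hn : 1 < n) (hx : IsCoprime x n) : 0 < x % n :=
  (Int.emod_pos_of_not_dvd (by simpa using not_dvd_mul_of_isCoprime hx one_pos hn)).resolve_left
    (by omega)

lemma dvd_add_of_emod_mul_add_emod_mul_eq {t a b : ℤ} (ht : IsCoprime t n)
    (h : t * a % n + t * b % n = n) : n ∣ a + b :=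
  ht.symm.dvd_of_dvd_mul_left
    (Int.dvd_of_emod_eq_zero (by rw [mul_add, Int.add_emod, h, Int.emod_self]))

lemma emod_add_emod_eq_self {a b : ℤ} (hn : 0 < n) (ha : ¬ n ∣ a) (hab : n ∣ a + b) :
    a % n + b % n = n := by
  have hb : ¬ n ∣ b := fun hb => ha ((dvd_add_left hb).mp hab)
  have ha0 : a % n ≠ 0 := fun h => ha (Int.dvd_of_emod_eq_zero h)
  have hb0 : b % n ≠ 0 := fun h => hb (Int.dvd_of_emod_eq_zero h)
  have hdvd : n ∣ a % n + b % n - n := by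
    refine dvd_sub (Int.dvd_of_emod_eq_zero ?_) dvd_rfl
    rw [← Int.add_emod]
    exact Int.emod_eq_zero_of_dvd hab
  have := Int.emod_nonneg a hn.ne'
  have := Int.emod_nonneg b hn.ne'
  have := Int.emod_lt_of_pos a hn
  have := Int.emod_lt_of_pos b hn
  have := Int.eq_zero_of_abs_lt_dvd hdvd (abs_sub_lt_iff.mpr ⟨by omega, by omega⟩)
  omega

lemma eq_of_modEq_of_nonneg_of_lt {a b : ℤ} (h : a ≡ b [ZMOD n]) (ha : 0 ≤ a) (han : a < n)
    (hb : 0 ≤ b) (hbn : b < n) : a = b :=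
  (Int.emod_eq_of_lt ha han).symm.trans (h.eq.trans (Int.emod_eq_of_lt hb hbn))

lemma add_one_mul_emod {y : ℤ} (hn : 0 < n) (hy : 0 ≤ y) (hyn : y < n) (k : ℤ) :
    (k + 1) * y % n = k * y % n + y ∨ (k + 1) * y % n = k * y % n + y - n := by
  have h : (k + 1) * y % n = (k * y % n + y) % n := by rw [add_one_mul, Int.emod_add_emod]
  have := Int.emod_nonneg (k * y) hn.ne'
  have := Int.emod_lt_of_pos (k * y) hn
  rcases lt_or_ge (k * y % n + y) n with hlt | hge
  · exact .inl (by rw [h, Int.emod_eq_of_lt (by omega) hlt])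
  · exact .inr (by rw [h, ← Int.sub_emod_right, Int.emod_eq_of_lt (by omega) (by omega)])

lemma isCoprime_of_forall_not_dvd_mul {s : ℤ} (hn : 0 < n)
    (h : ∀ k, 0 < k → k < n → ¬ n ∣ k * s) : IsCoprime s n := by
  rw [Int.isCoprime_iff_gcd_eq_one]
  by_contra hg
  obtain ⟨k, hk⟩ := Int.gcd_dvd_right s n
  obtain ⟨e, he⟩ := Int.gcd_dvd_left s n
  have hg2 : (2 : ℤ) ≤ s.gcd n := by
    have : s.gcd n ≠ 0 := fun h0 => hn.ne' (Int.gcd_eq_zero_iff.mp h0).2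
    omega
  have hk0 : 0 < k := by nlinarith
  exact h k hk0 (by nlinarith) ⟨e, by linear_combination k * he - e * hk⟩

lemma emod_mul_lt_of_emod_mul_lt {a b k : ℤ} (hn : 0 < n) (ha : 0 < a) (hb : 0 < b)
    (habn : a + b ≤ n)
    (H : ∀ k, 0 < k → k < n → k * a % n + k * b % n = k * (a + b - 1) % n + k)
    (hk : 1 < k) (hkn : k < n) (hjump : k * b % n < b) :
    k * (a + b - 1) % n < a + b - 1 := by
  -- `hjump` says that `b` wraps around `n` between the multiples `k - 1` and `k`; comparing `H`
  -- at `k - 1` and `k` shows that then `a + b - 1` wraps around as well.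
  obtain ⟨j, rfl⟩ : ∃ j, k = j + 1 := ⟨k - 1, by ring⟩
  have hj := H j (by omega) (by omega)
  have hj1 := H (j + 1) (by omega) hkn
  have := Int.emod_nonneg (j * a) hn.ne'
  have := Int.emod_nonneg (j * b) hn.ne'
  have := Int.emod_nonneg (j * (a + b - 1)) hn.ne'
  have := Int.emod_lt_of_pos (j * a) hn
  have := Int.emod_lt_of_pos (j * b) hn
  have := Int.emod_lt_of_pos (j * (a + b - 1)) hn
  rcases add_one_mul_emod hn ha.le (by omega) j with ha' | ha' <;>
  rcases add_one_mul_emod hn hb.le (by omega) j with hb' | hb' <;>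
  rcases add_one_mul_emod hn (y := a + b - 1) (by omega) (by omega) j with hm' | hm' <;>
  omega

lemma mul_lt_of_forall_emod_mul_lt {σ m N c : ℤ} (hσ : 0 ≤ σ) (hσn : σ < n) (hmn : 2 * m ≤ n)
    (h : ∀ c, 0 < c → c ≤ N → σ * c % n < m) (hc : 0 < c) (hcN : c ≤ N) : σ * c < m := by
  have hσm : σ < m := by simpa [Int.emod_eq_of_lt hσ hσn] using h 1 one_pos (by omega)
  induction c, (show 1 ≤ c by omega) using Int.leInduction with
  | base => simpa using hσm
  | succ c hc ih =>
    have := ih (by omega) (by omega)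
    have hlt := h (c + 1) (by omega) hcN
    rwa [Int.emod_eq_of_lt (by positivity) (by nlinarith)] at hlt

theorem eq_one_of_forall_emod_mul_add_emod_mul {a b : ℤ} (hn : 0 < n) (ha : 0 < a) (hab : a ≤ b)
    (hmn : 2 * (a + b - 1) ≤ n) (hb : IsCoprime b n)
    (H : ∀ k, 0 < k → k < n → k * a % n + k * b % n = k * (a + b - 1) % n + k) :
    a = 1 := by
  rcases (show b = 1 ∨ 2 ≤ b by omega) with rfl | hb2
  · omega
  obtain ⟨u, v, huv⟩ := hb
  have hub : u * b ≡ 1 [ZMOD n] := Int.modEq_iff_dvd.mpr ⟨v, by linear_combination -huv⟩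
  set m := a + b - 1
  set σ := u * m % n
  have hσ0 : 0 ≤ σ := Int.emod_nonneg _ hn.ne'
  -- `k ≡ c / b`, so `(k b)_n = c < b` and `(k m)_n = (σ c)_n`.
  have hσc : ∀ c, 0 < c → c ≤ b - 1 → σ * c % n < m := by
    intro c hc hcb
    set k := u * c % n
    have hkb : k * b % n = c := by
      refine eq_of_modEq_of_nonneg_of_lt ?_ (Int.emod_nonneg _ hn.ne') (Int.emod_lt_of_pos _ hn)
        hc.le (by omega)
      calc k * b % n ≡ k * b [ZMOD n] := Int.mod_modEq _ _
        _ ≡ u * c * b [ZMOD n] := (Int.mod_modEq _ _).mul_right _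
        _ = c * (u * b) := by ring
        _ ≡ c * 1 [ZMOD n] := hub.mul_left _
        _ = c := mul_one c
    have hkm : k * m % n = σ * c % n := Int.ModEq.eq <| calc
      k * m ≡ u * c * m [ZMOD n] := (Int.mod_modEq _ _).mul_right _
      _ = u * m * c := by ring
      _ ≡ σ * c [ZMOD n] := ((Int.mod_modEq _ _).mul_right _).symm
    have := Int.emod_nonneg (u * c) hn.ne'
    have := Int.emod_lt_of_pos (u * c) hn
    rcases (show k = 0 ∨ k = 1 ∨ 1 < k by omega) with h0 | h1 | hk1
    · rw [h0, zero_mul, Int.zero_emod] at hkb; omega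
    · rw [h1, one_mul, Int.emod_eq_of_lt (by omega) (by omega)] at hkb; omega
    · rw [← hkm]
      exact emod_mul_lt_of_emod_mul_lt hn ha (by omega) (by omega) H hk1 (by omega) (by omega)
  have hσb : σ * b = m := by
    have hσn : σ < n := Int.emod_lt_of_pos _ hn
    have h₁ := mul_lt_of_forall_emod_mul_lt hσ0 hσn hmn hσc one_pos (by omega)
    have h₂ := mul_lt_of_forall_emod_mul_lt hσ0 hσn hmn hσc (c := b - 1) (by omega) le_rfl
    have hmod : σ * b ≡ m [ZMOD n] := calc
      σ * b ≡ u * m * b [ZMOD n] := (Int.mod_modEq _ _).mul_right _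
      _ = m * (u * b) := by ring
      _ ≡ m * 1 [ZMOD n] := hub.mul_left _
      _ = m := mul_one m
    exact eq_of_modEq_of_nonneg_of_lt hmod (by positivity) (by nlinarith) (by omega) (by omega)
  have : σ = 1 := by
    rcases (show σ = 0 ∨ σ = 1 ∨ 2 ≤ σ by omega) with h | h | h
    · simp [h] at hσb; omega
    · exact h
    · nlinarith
  rw [this, one_mul] at hσb
  omega

lemma eq_one_or_eq_one_of_le_two_mul {y₁ y₂ y₃ : ℤ} (hn : 0 < n) (h₁ : 0 < y₁) (h₂ : 0 < y₂)
    (hc₁ : IsCoprime y₁ n) (hc₂ : IsCoprime y₂ n) (hc₃ : IsCoprime y₃ n) (hy₃ : n ≤ 2 * y₃)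
    (hsum : y₁ + y₂ + y₃ = n + 1)
    (H : ∀ k, 0 < k → k < n → k * y₁ % n + k * y₂ % n + k * y₃ % n = n + k) :
    y₁ = 1 ∨ y₂ = 1 := by
  have H' : ∀ k, 0 < k → k < n → k * y₁ % n + k * y₂ % n = k * (y₁ + y₂ - 1) % n + k := by
    intro k hk hkn
    have := emod_add_emod_eq_self (b := k * (y₁ + y₂ - 1)) hn
      (not_dvd_mul_of_isCoprime hc₃ hk hkn) ⟨k, by linear_combination k * hsum⟩
    linarith [H k hk hkn]
  rcases le_total y₁ y₂ with h | h
  · exact .inl (eq_one_of_forall_emod_mul_add_emod_mul hn h₁ h (by omega) hc₂ H')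
  · refine .inr (eq_one_of_forall_emod_mul_add_emod_mul hn h₂ h (by omega) hc₁ fun k hk hkn => ?_)
    rw [add_comm y₂ y₁]
    linarith [H' k hk hkn]

lemma eq_one_of_forall_emod_mul_sum_eq {y₁ y₂ y₃ : ℤ} (hn : 0 < n)
    (h₁ : 0 < y₁) (h₂ : 0 < y₂) (h₃ : 0 < y₃) (h₁n : y₁ < n) (h₂n : y₂ < n) (h₃n : y₃ < n)
    (hc₁ : IsCoprime y₁ n) (hc₂ : IsCoprime y₂ n) (hc₃ : IsCoprime y₃ n)
    (H : ∀ k, 0 < k → k < n → k * y₁ % n + k * y₂ % n + k * y₃ % n = n + k) :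
    y₁ = 1 ∨ y₂ = 1 ∨ y₃ = 1 := by
  have hsum : y₁ + y₂ + y₃ = n + 1 := by
    simpa [Int.emod_eq_of_lt, h₁.le, h₂.le, h₃.le, h₁n, h₂n, h₃n] using H 1 one_pos (by omega)
  by_contra! hne
  have hbig : n ≤ 2 * y₁ ∨ n ≤ 2 * y₂ ∨ n ≤ 2 * y₃ := by
    by_contra! hsmall
    have := H 2 two_pos (by omega)
    rw [Int.emod_eq_of_lt (by omega) hsmall.1, Int.emod_eq_of_lt (by omega) hsmall.2.1,
      Int.emod_eq_of_lt (by omega) hsmall.2.2] at this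
    omega
  rcases hbig with h | h | h
  · have := eq_one_or_eq_one_of_le_two_mul hn h₂ h₃ hc₂ hc₃ hc₁ h (by omega)
      fun k hk hkn => by linarith [H k hk hkn]
    omega
  · have := eq_one_or_eq_one_of_le_two_mul hn h₁ h₃ hc₁ hc₃ hc₂ h (by omega)
      fun k hk hkn => by linarith [H k hk hkn]
    omega
  · have := eq_one_or_eq_one_of_le_two_mul hn h₁ h₂ hc₁ hc₂ hc₃ h (by omega) H
    omega

lemma emod_mul_sum_eq {x₁ x₂ x₃ k : ℤ} (hn : 0 < n)
    (hc₁ : IsCoprime x₁ n) (hc₂ : IsCoprime x₂ n) (hc₃ : IsCoprime x₃ n)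
    (hbig : ∀ k, 0 < k → k < n → n < k * x₁ % n + k * x₂ % n + k * x₃ % n)
    (hk : 0 < k) (hkn : k < n) :
    k * x₁ % n + k * x₂ % n + k * x₃ % n = n + k * (x₁ + x₂ + x₃) % n := by
  have hpair : ∀ x, IsCoprime x n → k * x % n + (n - k) * x % n = n := fun x hx =>
    emod_add_emod_eq_self hn (not_dvd_mul_of_isCoprime hx hk hkn) ⟨x, by ring⟩
  have hlt : k * x₁ % n + k * x₂ % n + k * x₃ % n < 2 * n := by
    linarith [hbig (n - k) (by omega) (by omega), hpair x₁ hc₁, hpair x₂ hc₂, hpair x₃ hc₃]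
  have hmod : k * x₁ % n + k * x₂ % n + k * x₃ % n - n ≡ k * (x₁ + x₂ + x₃) % n [ZMOD n] := by
    refine Int.ModEq.trans ?_ (Int.mod_modEq _ _).symm
    exact Int.modEq_iff_dvd.mpr ⟨k * x₁ / n + k * x₂ / n + k * x₃ / n + 1, by
      simp only [Int.emod_def]; ring⟩
  linarith [eq_of_modEq_of_nonneg_of_lt hmod (by linarith [hbig k hk hkn]) (by linarith)
    (Int.emod_nonneg _ hn.ne') (Int.emod_lt_of_pos _ hn)]

lemma emod_mul_emod_sum_eq {x₁ x₂ x₃ t k : ℤ} (hn : 0 < n) (ht : IsCoprime t n)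
    (hts : t * (x₁ + x₂ + x₃) ≡ 1 [ZMOD n])
    (hS : ∀ k, 0 < k → k < n → k * x₁ % n + k * x₂ % n + k * x₃ % n = n + k * (x₁ + x₂ + x₃) % n)
    (hk : 0 < k) (hkn : k < n) :
    k * (t * x₁ % n) % n + k * (t * x₂ % n) % n + k * (t * x₃ % n) % n = n + k := by
  set k' := k * t % n
  have hk' : 0 < k' :=
    (Int.emod_pos_of_not_dvd (not_dvd_mul_of_isCoprime ht hk hkn)).resolve_left hn.ne'
  have hscale : ∀ x, k * (t * x % n) % n = k' * x % n := fun x => Int.ModEq.eq <| calc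
    k * (t * x % n) ≡ k * (t * x) [ZMOD n] := (Int.mod_modEq _ _).mul_left _
    _ = k * t * x := by ring
    _ ≡ k' * x [ZMOD n] := ((Int.mod_modEq _ _).mul_right _).symm
  have hks : k' * (x₁ + x₂ + x₃) % n = k := by
    refine (Int.ModEq.eq ?_).trans (Int.emod_eq_of_lt hk.le hkn)
    calc k' * (x₁ + x₂ + x₃) ≡ k * t * (x₁ + x₂ + x₃) [ZMOD n] := (Int.mod_modEq _ _).mul_right _
      _ = k * (t * (x₁ + x₂ + x₃)) := by ring
      _ ≡ k * 1 [ZMOD n] := hts.mul_left _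
      _ = k := mul_one k
  rw [hscale, hscale, hscale, hS k' hk' (Int.emod_lt_of_pos _ hn), hks]

theorem dvd_add_of_forall_lt_emod_mul_sum {x₁ x₂ x₃ : ℤ} (hn : 1 < n)
    (hc₁ : IsCoprime x₁ n) (hc₂ : IsCoprime x₂ n) (hc₃ : IsCoprime x₃ n)
    (hbig : ∀ k, 0 < k → k < n → n < k * x₁ % n + k * x₂ % n + k * x₃ % n) :
    n ∣ x₁ + x₂ ∨ n ∣ x₁ + x₃ ∨ n ∣ x₂ + x₃ := by
  have hn0 : 0 < n := one_pos.trans hn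
  have hS := fun k (hk : 0 < k) hkn => emod_mul_sum_eq hn0 hc₁ hc₂ hc₃ hbig hk hkn
  obtain ⟨t, v, htv⟩ : IsCoprime (x₁ + x₂ + x₃) n :=
    isCoprime_of_forall_not_dvd_mul hn0 fun k hk hkn hdvd => by
      have := hbig k hk hkn
      rw [hS k hk hkn, Int.emod_eq_zero_of_dvd hdvd] at this
      omega
  have ht : IsCoprime t n := ⟨x₁ + x₂ + x₃, v, by linarith⟩
  have H := fun k (hk : 0 < k) hkn => emod_mul_emod_sum_eq hn0 ht
    (Int.modEq_iff_dvd.mpr ⟨v, by linear_combination -htv⟩) hS hk hkn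
  have hsum := H 1 one_pos hn
  simp only [one_mul, Int.emod_emod] at hsum
  have hpos := fun x (hx : IsCoprime x n) => emod_pos_of_isCoprime hn (ht.mul_left hx)
  have hlt := fun x => Int.emod_lt_of_pos (t * x) hn0
  have hcop := fun x (hx : IsCoprime x n) => isCoprime_emod (ht.mul_left hx)
  rcases eq_one_of_forall_emod_mul_sum_eq hn0 (hpos x₁ hc₁) (hpos x₂ hc₂) (hpos x₃ hc₃) (hlt x₁)
      (hlt x₂) (hlt x₃) (hcop x₁ hc₁) (hcop x₂ hc₂) (hcop x₃ hc₃) H with h | h | h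
  · exact .inr (.inr (dvd_add_of_emod_mul_add_emod_mul_eq ht (by omega)))
  · exact .inr (.inl (dvd_add_of_emod_mul_add_emod_mul_eq ht (by omega)))
  · exact .inl (dvd_add_of_emod_mul_add_emod_mul_eq ht (by omega))

end Residues

theorem stmt_12 (n : ℕ) (hn : 2 ≤ n) (x₁ x₂ x₃ : ℤ)
    (hg₁ : Int.gcd x₁ n = 1) (hg₂ : Int.gcd x₂ n = 1) (hg₃ : Int.gcd x₃ n = 1)
    (hbig : ∀ k : ℕ, 1 ≤ k → k ≤ n - 1 →
      ((k : ℤ) * x₁) % n + ((k : ℤ) * x₂) % n + ((k : ℤ) * x₃) % n > n) :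
    (n : ℤ) ∣ (x₁ + x₂) ∨ (n : ℤ) ∣ (x₁ + x₃) ∨ (n : ℤ) ∣ (x₂ + x₃) := by
  refine dvd_add_of_forall_lt_emod_mul_sum (by omega) (Int.isCoprime_iff_gcd_eq_one.mpr hg₁)
    (Int.isCoprime_iff_gcd_eq_one.mpr hg₂) (Int.isCoprime_iff_gcd_eq_one.mpr hg₃) fun k hk hkn => ?_
  lift k to ℕ using hk.le
  exact hbig k (by omega) (by omega)
end

section
/- Let n ≥ 2 and let x₁, x₂, x₃ ∈ ℤ. If (k·x₁)_n + (k·x₂)_n + (k·x₃)_n > n for every integer k ∈ [1, n−1], then gcd(x₁ + x₂ + x₃, n) = 1. -/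
/-! If `d = gcd(x₁ + x₂ + x₃, n) > 1`, take `k = n / d`, so that `n ∣ k (x₁ + x₂ + x₃)`. The three
residues of `k xᵢ` then sum to a multiple of `n` in `(n, 3n)`, i.e. to `2n`, so none of them
vanishes; the residues of `(n - k) xᵢ` are their complements `n - (k xᵢ)_n`, which sum to `n`. -/

namespace Int

theorem sub_mul_emod_eq_sub_emod {n k x : ℤ} (hn : 0 < n) (h : k * x % n ≠ 0) :
    (n - k) * x % n = n - k * x % n := by
  have hndvd : ¬ n ∣ k * x := fun hd => h (Int.emod_eq_zero_of_dvd hd)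
  rw [sub_mul, Int.mul_sub_emod_self_left, Int.neg_emod, if_neg hndvd, Int.natAbs_of_nonneg hn.le]

theorem emod_add_emod_add_emod_eq_two_mul {n a b c : ℤ} (hn : 0 < n) (hdvd : n ∣ a + b + c)
    (hgt : n < a % n + b % n + c % n) : a % n + b % n + c % n = 2 * n := by
  have hres : n ∣ a % n + b % n + c % n := by
    rw [Int.dvd_iff_emod_eq_zero] at hdvd ⊢
    simpa [Int.add_emod] using hdvd
  obtain ⟨u, hu⟩ := hres
  have hlt : a % n + b % n + c % n < 3 * n := by
    have := Int.emod_lt_of_pos a hn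
    have := Int.emod_lt_of_pos b hn
    have := Int.emod_lt_of_pos c hn
    omega
  have hu2 : u = 2 := by
    rw [hu] at hgt hlt
    have : 1 < u := by nlinarith
    have : u < 3 := by nlinarith
    omega
  rw [hu, hu2, mul_comm]

theorem sub_mul_emod_sum_eq {n k x₁ x₂ x₃ : ℤ} (hn : 0 < n) (hdvd : n ∣ k * (x₁ + x₂ + x₃))
    (hgt : n < k * x₁ % n + k * x₂ % n + k * x₃ % n) :
    (n - k) * x₁ % n + (n - k) * x₂ % n + (n - k) * x₃ % n = n := by
  have hsum := emod_add_emod_add_emod_eq_two_mul hn (by rwa [← mul_add, ← mul_add]) hgt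
  have h₁ := Int.emod_lt_of_pos (k * x₁) hn
  have h₂ := Int.emod_lt_of_pos (k * x₂) hn
  have h₃ := Int.emod_lt_of_pos (k * x₃) hn
  rw [sub_mul_emod_eq_sub_emod hn (by omega), sub_mul_emod_eq_sub_emod hn (by omega),
    sub_mul_emod_eq_sub_emod hn (by omega)]
  omega

theorem exists_dvd_mul_of_gcd_ne_one (s : ℤ) {n : ℕ} (hn : 0 < n) (h : Int.gcd s n ≠ 1) :
    ∃ k : ℕ, 0 < k ∧ k < n ∧ (n : ℤ) ∣ k * s := by
  set d := Int.gcd s n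
  have hdn : d ∣ n := by exact_mod_cast Int.gcd_dvd_right s (n : ℤ)
  have hd : 1 < d := by
    have := Nat.pos_of_dvd_of_pos hdn hn
    omega
  refine ⟨n / d, Nat.div_pos (Nat.le_of_dvd hn hdn) (by omega), Nat.div_lt_self hn hd, ?_⟩
  have hn_eq : (n : ℤ) = (n / d : ℕ) * d := by exact_mod_cast (Nat.div_mul_cancel hdn).symm
  rw [hn_eq]
  exact mul_dvd_mul_left _ (Int.gcd_dvd_left s n)

end Int

theorem stmt_13 (n : ℕ) (hn : 2 ≤ n) (x₁ x₂ x₃ : ℤ)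
    (hbig : ∀ k : ℕ, 1 ≤ k → k ≤ n - 1 →
      ((k : ℤ) * x₁) % n + ((k : ℤ) * x₂) % n + ((k : ℤ) * x₃) % n > n) :
    Int.gcd (x₁ + x₂ + x₃) n = 1 := by
  by_contra hgcd
  obtain ⟨k, hk, hkn, hdvd⟩ := Int.exists_dvd_mul_of_gcd_ne_one _ (by omega) hgcd
  have hcompl := Int.sub_mul_emod_sum_eq (by omega) hdvd (hbig k hk (by omega))
  have hbig' := hbig (n - k) (by omega) (by omega)
  rw [Nat.cast_sub hkn.le] at hbig'
  omega
end

section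
/- Let n ≥ 2 and let x₁, x₂, x₃ ∈ [1, n−1] with gcd(xᵢ, n) = 1 for all i, with x₁ + x₂ + x₃ ≡ 1 (mod n), and such that (k·x₁)_n + (k·x₂)_n + (k·x₃)_n > n for every k ∈ [1, n−1]. Then for every u ∈ [1, n−1], (u·x₁)_n + (u·x₂)_n + (u·x₃)_n = n + u. -/
theorem stmt_14 (n : ℕ) (hn : 2 ≤ n) (x₁ x₂ x₃ : ℕ)
    (h₁ : 1 ≤ x₁) (h₁' : x₁ ≤ n - 1) (h₂ : 1 ≤ x₂) (h₂' : x₂ ≤ n - 1)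
    (h₃ : 1 ≤ x₃) (h₃' : x₃ ≤ n - 1)
    (hg₁ : Nat.gcd x₁ n = 1) (hg₂ : Nat.gcd x₂ n = 1) (hg₃ : Nat.gcd x₃ n = 1)
    (hsum : x₁ + x₂ + x₃ ≡ 1 [MOD n])
    (hbig : ∀ k : ℕ, 1 ≤ k → k ≤ n - 1 →
      ((k : ℤ) * x₁) % n + ((k : ℤ) * x₂) % n + ((k : ℤ) * x₃) % n > n) :
    ∀ u : ℕ, 1 ≤ u → u ≤ n - 1 →
      ((u : ℤ) * x₁) % n + ((u : ℤ) * x₂) % n + ((u : ℤ) * x₃) % n = n + u := by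
  intro u hu hu'
  have hnz : (n:ℤ) ≠ 0 := by positivity
  set v : ℕ := n - u with hv
  have hv1 : 1 ≤ v := by omega
  have hv' : v ≤ n - 1 := by omega
  have huv : (v:ℤ) = (n:ℤ) - u := by push_cast; omega
  -- per-coordinate: ((v*x) % n) = n - ((u*x) % n)
  have key : ∀ x : ℕ, 1 ≤ x → Nat.gcd x n = 1 →
      ((v:ℤ) * x) % n = (n:ℤ) - ((u:ℤ) * x) % n := by
    intro x hx hg
    have ha0 : 0 ≤ ((u:ℤ)*x) % n := Int.emod_nonneg _ hnz
    have ha1 : ((u:ℤ)*x) % n < n := Int.emod_lt_of_pos _ (by positivity)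
    have hb0 : 0 ≤ ((v:ℤ)*x) % n := Int.emod_nonneg _ hnz
    have hb1 : ((v:ℤ)*x) % n < n := Int.emod_lt_of_pos _ (by positivity)
    have hanz : ((u:ℤ)*x) % n ≠ 0 := by
      intro h
      have hdvd : (n:ℤ) ∣ (u:ℤ)*x := Int.dvd_of_emod_eq_zero h
      have hdvd' : n ∣ u * x := by exact_mod_cast hdvd
      have : n ∣ u := (Nat.Coprime.dvd_of_dvd_mul_right
        (Nat.coprime_comm.mp hg) hdvd')
      have := Nat.le_of_dvd (by omega) this
      omega
    have hsum0 : (((u:ℤ)*x) % n + ((v:ℤ)*x) % n) % n = 0 := by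
      rw [← Int.add_emod]
      have : (u:ℤ)*x + (v:ℤ)*x = (n:ℤ) * x := by rw [huv]; ring
      rw [this, Int.mul_emod_right]
    have hlt : (0:ℤ) < ((u:ℤ)*x) % n + ((v:ℤ)*x) % n := by
      rcases lt_or_eq_of_le ha0 with h | h
      · linarith
      · exact absurd h.symm hanz
    have hlt2 : ((u:ℤ)*x) % n + ((v:ℤ)*x) % n < 2*n := by linarith
    have : ((u:ℤ)*x) % n + ((v:ℤ)*x) % n = n := by
      have hd : (n:ℤ) ∣ ((u:ℤ)*x) % n + ((v:ℤ)*x) % n :=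
        Int.dvd_of_emod_eq_zero hsum0
      rcases hd with ⟨c, hc⟩
      have hc1 : c = 1 := by nlinarith
      rw [hc1, mul_one] at hc
      linarith
    linarith
  have k1 := key x₁ h₁ hg₁
  have k2 := key x₂ h₂ hg₂
  have k3 := key x₃ h₃ hg₃
  have Bu := hbig u hu hu'
  have Bv := hbig v hv1 hv'
  set f : ℤ := ((u:ℤ) * x₁) % n + ((u:ℤ) * x₂) % n + ((u:ℤ) * x₃) % n with hf
  have hfv : ((v:ℤ) * x₁) % n + ((v:ℤ) * x₂) % n + ((v:ℤ) * x₃) % n = 3*n - f := by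
    rw [k1, k2, k3, hf]; ring
  rw [hfv] at Bv
  have hub : f < 2*n := by linarith
  have hlb : (n:ℤ) < f := Bu
  -- f ≡ u (mod n)
  have hmod : f % n = (u:ℤ) % n := by
    have hs : ((x₁:ℤ) + x₂ + x₃) % n = 1 % n := by
      have := hsum
      unfold Nat.ModEq at this
      exact_mod_cast congrArg (fun t : ℕ => (t : ℤ)) this
    calc f % n = ((u:ℤ)*x₁ + (u:ℤ)*x₂ + (u:ℤ)*x₃) % n := by
          rw [hf]; simp [Int.add_emod, Int.emod_emod_of_dvd]
      _ = ((u:ℤ) * ((x₁:ℤ) + x₂ + x₃)) % n := by ring_nf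
      _ = ((u:ℤ) % n * (((x₁:ℤ) + x₂ + x₃) % n)) % n := by rw [Int.mul_emod]
      _ = ((u:ℤ) % n * ((1:ℤ) % n)) % n := by rw [hs]
      _ = ((u:ℤ) * 1) % n := by rw [← Int.mul_emod]
      _ = (u:ℤ) % n := by ring_nf
  have hunat : u < n := by omega
  have hun : (u:ℤ) % n = u := Int.emod_eq_of_lt (by positivity) (by exact_mod_cast hunat)
  have hdvd : (n:ℤ) ∣ f - u := Int.ModEq.dvd (hmod.symm)
  rcases hdvd with ⟨c, hc⟩
  have hc1 : c = 1 := by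
    have hun' : (u:ℤ) < n := by exact_mod_cast hunat
    have hu0 : (0:ℤ) < u := by exact_mod_cast hu
    have hn0 : (0:ℤ) < n := by positivity
    have ha : (n:ℤ)*0 < n*c := by linarith
    have hb : (n:ℤ)*c < n*2 := by linarith
    have hca := lt_of_mul_lt_mul_left ha hn0.le
    have hcb := lt_of_mul_lt_mul_left hb hn0.le
    omega
  have : f - u = n := by rw [hc, hc1]; ring
  linarith
end

section
/- Let n ≥ 2 and let a, b ∈ [2, n−1] with gcd(a, n) = gcd(b, n) = 1. If ⌊n/a⌋ = ⌊n/b⌋ ≥ 2 and X(b) ⊆ X(a), then X(a) = X(b). -/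
def ceilFrac (n x t : ℕ) : ℤ := ⌈(t * n : ℚ) / x⌉

section ceilFrac

variable {n x : ℕ}

@[simp]
theorem ceilFrac_zero : ceilFrac n x 0 = 0 := by
  simp [ceilFrac]

theorem ceilFrac_self (hx : x ≠ 0) : ceilFrac n x x = n := by
  have hx' : (x : ℚ) ≠ 0 := by exact_mod_cast hx
  simp [ceilFrac, mul_div_cancel_left₀ _ hx']

theorem ceilFrac_mono : Monotone (ceilFrac n x) := fun s s' h => by
  unfold ceilFrac
  gcongr

theorem ceilFrac_add_div_le {s s' : ℕ} (h : s < s') :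
    ceilFrac n x s + (n / x : ℕ) ≤ ceilFrac n x s' := by
  have hstep : (s * n : ℚ) / x + (n / x : ℕ) ≤ (s' * n : ℚ) / x := by
    have hs : (s : ℚ) + 1 ≤ s' := by exact_mod_cast h
    calc (s * n : ℚ) / x + (n / x : ℕ) ≤ (s * n : ℚ) / x + n / x := by
          gcongr; exact Nat.cast_div_le
      _ = ((s + 1) * n : ℚ) / x := by ring
      _ ≤ (s' * n : ℚ) / x := by gcongr
  unfold ceilFrac
  rw [← Int.ceil_add_natCast]
  exact Int.ceil_le_ceil hstep

theorem ceilFrac_succ_le (t : ℕ) : ceilFrac n x (t + 1) ≤ ceilFrac n x t + (n / x : ℕ) + 1 := by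
  have hsplit : ((t + 1 : ℕ) * n : ℚ) / x = (t * n : ℚ) / x + n / x := by push_cast; ring
  have hceil : ⌈(n / x : ℚ)⌉ ≤ (n / x : ℕ) + 1 := by
    simpa only [Rat.floor_natCast_div_natCast, Int.natCast_div] using
      Int.ceil_le_floor_add_one (n / x : ℚ)
  calc ceilFrac n x (t + 1) ≤ ceilFrac n x t + ⌈(n / x : ℚ)⌉ := by
        unfold ceilFrac; rw [hsplit]; exact Int.ceil_add_le _ _
    _ ≤ ceilFrac n x t + (n / x : ℕ) + 1 := by omega

theorem ceilFrac_mem_X {t : ℕ} (h0 : 0 < t) (hx : t < x) : ceilFrac n x t ∈ X n x :=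
  Finset.mem_image_of_mem _ (Finset.mem_Icc.2 ⟨h0, by omega⟩)

theorem ceilFrac_mem_range_of_X_subset {y t : ℕ} (hx : x ≠ 0) (hsub : X n y ⊆ X n x)
    (ht : t ≤ y) : ceilFrac n y t ∈ Set.range (ceilFrac n x) := by
  rcases Nat.eq_zero_or_pos t with rfl | h0
  · exact ⟨0, by simp⟩
  rcases ht.lt_or_eq with hty | rfl
  · obtain ⟨s, -, hs⟩ := Finset.mem_image.1 (hsub (ceilFrac_mem_X h0 hty))
    exact ⟨s, hs⟩
  · exact ⟨x, by rw [ceilFrac_self hx, ceilFrac_self h0.ne']⟩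

theorem add_div_le_of_mem_range {u w : ℤ} (hu : u ∈ Set.range (ceilFrac n x))
    (hw : w ∈ Set.range (ceilFrac n x)) (h : u < w) : u + (n / x : ℕ) ≤ w := by
  obtain ⟨s, rfl⟩ := hu
  obtain ⟨s', rfl⟩ := hw
  exact ceilFrac_add_div_le (ceilFrac_mono.reflect_lt h)

end ceilFrac

theorem exists_lt_le_succ_of_lt_of_le (f : ℕ → ℤ) {w : ℤ} :
    ∀ {m : ℕ}, f 0 < w → w ≤ f m → ∃ t < m, f t < w ∧ w ≤ f (t + 1)
  | 0, h0, hm => absurd (h0.trans_le hm) (lt_irrefl _)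
  | m + 1, h0, hm => by
    by_cases hw : w ≤ f m
    · obtain ⟨t, ht, hft⟩ := exists_lt_le_succ_of_lt_of_le f h0 hw
      exact ⟨t, ht.trans (Nat.lt_succ_self m), hft⟩
    · exact ⟨m, Nat.lt_succ_self m, not_le.1 hw, hm⟩

theorem stmt_16_general (n a b : ℕ)
    (hfloor : n / a = n / b) (hd2 : 2 ≤ n / a) (hsub : X n b ⊆ X n a) :
    X n a = X n b := by
  refine Finset.Subset.antisymm (fun w hw => ?_) hsub
  by_contra hwb
  have ha : a ≠ 0 := by rintro rfl; simp at hd2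
  have hb : b ≠ 0 := by rintro rfl; rw [hfloor, Nat.div_zero] at hd2; omega
  obtain ⟨s, hs, rfl⟩ := Finset.mem_image.1 hw
  rw [Finset.mem_Icc] at hs
  change ceilFrac n a s ∉ X n b at hwb
  have hw0 : 0 < ceilFrac n a s := by
    have := ceilFrac_add_div_le (n := n) (x := a) (show 0 < s by omega)
    rw [ceilFrac_zero] at this
    omega
  have hwn : ceilFrac n a s + (n / a : ℕ) ≤ n := by
    simpa only [ceilFrac_self ha] using
      ceilFrac_add_div_le (n := n) (x := a) (show s < a by omega)
  obtain ⟨t, htb, hut, hwv⟩ := exists_lt_le_succ_of_lt_of_le (ceilFrac n b) (w := ceilFrac n a s)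
    (by rwa [ceilFrac_zero]) (show _ ≤ ceilFrac n b b by rw [ceilFrac_self hb]; omega)
  have hwv_lt : ceilFrac n a s < ceilFrac n b (t + 1) := by
    refine hwv.lt_of_ne fun h => ?_
    rcases (show t + 1 ≤ b from htb).lt_or_eq with ht | rfl
    · exact hwb (h ▸ ceilFrac_mem_X t.succ_pos ht)
    · rw [ceilFrac_self hb] at h
      omega
  have hmem {t : ℕ} (ht : t ≤ b) := ceilFrac_mem_range_of_X_subset (n := n) ha hsub ht
  have hlow := add_div_le_of_mem_range (hmem htb.le) ⟨s, rfl⟩ hut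
  have hhigh := add_div_le_of_mem_range ⟨s, rfl⟩ (hmem (t := t + 1) htb) hwv_lt
  have hgap := ceilFrac_succ_le (n := n) (x := b) t
  rw [← hfloor] at hgap
  omega

theorem stmt_16 (n a b : ℕ) (hn : 2 ≤ n)
    (ha1 : 2 ≤ a) (ha2 : a ≤ n - 1) (hb1 : 2 ≤ b) (hb2 : b ≤ n - 1)
    (hga : Nat.gcd a n = 1) (hgb : Nat.gcd b n = 1)
    (hfloor : n / a = n / b) (hd2 : 2 ≤ n / a) (hsub : X n b ⊆ X n a) :
    X n a = X n b :=
  stmt_16_general n a b hfloor hd2 hsub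
end

section
/- Let m, n ≥ 2, let k ∈ [0, n−1], and let G = C_n ⊕ C_{mn} (concretely ZMod n × ZMod (mn)). Let φ : G → C_n ⊕ C_n be the homomorphism φ(a, b) = (a, b mod n). Then every sequence S over G with |S| = mn+n−2+k admits a factorization S = W·W₁·…·W_{m−1} into subsequences such that 1 ≤ |Wᵢ| ≤ n and σ(φ(Wᵢ)) = 0 for every i ∈ [1, m−1]. -/
/-!
Every sequence of `3n - 2` terms in `C_n ⊕ C_n` has a nonempty zero-sum subsequence of length at
most `n` (`η(C_n ⊕ C_n) ≤ 3n - 2`), so `m - 1` such blocks can be removed from `S` one after the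
other: before each removal at least `mn + n - 2 - (m - 2)n = 3n - 2` terms are left.

For `n = p` prime, Chevalley–Warning applied to the two coordinates and the length gives a
zero-sum subsequence of length `p` or `2p`; one of length `2p` splits into two zero-sum parts, one
of which has length at most `p`. The bound is multiplicative along
`0 → C_b ⊕ C_b → C_ab ⊕ C_ab → C_a ⊕ C_a → 0`: extract `3b - 2` blocks of length at most `a` that
are zero-sum modulo `a`, then a zero-sum choice of at most `b` of their sums in `C_b ⊕ C_b`.
-/

open Multiset

theorem Multiset.exists_le_card_eq {α : Type*} {S : Multiset α} {k : ℕ} (h : k ≤ card S) :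
    ∃ T ≤ S, card T = k := by
  obtain ⟨T, hT⟩ := card_pos_iff_exists_mem.1 ((card_powersetCard k S).symm ▸ Nat.choose_pos h)
  exact ⟨T, mem_powersetCard.1 hT⟩

theorem Multiset.sum_map_prod_eq_zero {α A B : Type*} [AddCommMonoid A] [AddCommMonoid B]
    {f : α → A × B} {T : Multiset α} (h₁ : (T.map fun x => (f x).1).sum = 0)
    (h₂ : (T.map fun x => (f x).2).sum = 0) : (T.map f).sum = 0 := by
  have hfst := map_multiset_sum (AddMonoidHom.fst A B) (T.map f)
  have hsnd := map_multiset_sum (AddMonoidHom.snd A B) (T.map f)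
  simp only [map_map, Function.comp_def, AddMonoidHom.coe_fst, AddMonoidHom.coe_snd] at hfst hsnd
  exact Prod.ext (hfst.trans h₁) (hsnd.trans h₂)

open MvPolynomial in
theorem ZMod.exists_nonempty_forall_sum_eq_zero {p : ℕ} [Fact p.Prime] {ι σ : Type*}
    [Fintype ι] [Fintype σ] (g : ι → σ → ZMod p)
    (h : Fintype.card ι * (p - 1) < Fintype.card σ) :
    ∃ t : Finset σ, t.Nonempty ∧ ∀ i, ∑ j ∈ t, g i j = 0 := by
  classical
  have hp := (Fact.out : p.Prime)
  let F : ι → MvPolynomial σ (ZMod p) := fun i => ∑ j, g i j • X j ^ (p - 1)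
  have hdeg : ∑ i, (F i).totalDegree < Fintype.card σ := by
    refine lt_of_le_of_lt ?_ h
    calc ∑ i, (F i).totalDegree ≤ ∑ _i : ι, (p - 1) :=
          Finset.sum_le_sum fun i _ => totalDegree_finsetSum_le fun j _ =>
            (totalDegree_smul_le _ _).trans (totalDegree_X_pow _ _).le
      _ = _ := by simp
  let zero : {x : σ → ZMod p // ∀ i, eval x (F i) = 0} :=
    ⟨0, fun i => by simp [F, zero_pow (Nat.sub_ne_zero_of_lt hp.one_lt)]⟩
  have hcard : p ≤ Fintype.card {x : σ → ZMod p // ∀ i, eval x (F i) = 0} :=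
    Nat.le_of_dvd (Fintype.card_pos_iff.2 ⟨zero⟩)
      (char_dvd_card_solutions_of_fintype_sum_lt p hdeg)
  obtain ⟨⟨x, hx⟩, hx0⟩ := Fintype.exists_ne_of_one_lt_card (hp.one_lt.trans_le hcard) zero
  obtain ⟨j₀, hj₀⟩ := Function.ne_iff.1 fun h => hx0 (Subtype.ext h)
  refine ⟨Finset.univ.filter (x · ≠ 0), ⟨j₀, Finset.mem_filter.2 ⟨Finset.mem_univ _, hj₀⟩⟩,
    fun i => ?_⟩
  -- on the support of `x`, Fermat's little theorem turns `x j ^ (p - 1)` into `1`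
  calc ∑ j ∈ Finset.univ.filter (x · ≠ 0), g i j = ∑ j, g i j * x j ^ (p - 1) := by
        rw [Finset.sum_filter]
        refine Finset.sum_congr rfl fun j _ => ?_
        by_cases hj : x j = 0
        · simp [hj, zero_pow (Nat.sub_ne_zero_of_lt hp.one_lt)]
        · simp [hj, ZMod.pow_card_sub_one_eq_one hj]
    _ = 0 := by simpa [F] using hx i

theorem Multiset.exists_le_ne_zero_forall_sum_map_eq_zero {p : ℕ} [Fact p.Prime] {ι α : Type*}
    [Fintype ι] (g : ι → α → ZMod p) (S : Multiset α) (h : Fintype.card ι * (p - 1) < card S) :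
    ∃ T ≤ S, T ≠ 0 ∧ ∀ i, (T.map (g i)).sum = 0 := by
  classical
  obtain ⟨t, ht, hsum⟩ := ZMod.exists_nonempty_forall_sum_eq_zero (σ := S.toEnumFinset)
    (fun i x => g i x.1.1) (by simpa using h)
  refine ⟨(t.map (Function.Embedding.subtype _)).val.map Prod.fst,
    map_fst_le_of_subset_toEnumFinset (Finset.coe_subset.1 (Finset.map_subtype_subset t)),
    by simpa using ht.ne_empty, fun i => ?_⟩
  simpa using hsum i

/-- With `e = exp G` this is the bound `η(G) ≤ N`. The terms are labelled by `α`, so that a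
subsequence of the image of `S` under `f` comes with a preimage in `S`. -/
def HasShortZeroSum (G : Type*) [AddCommMonoid G] (N e : ℕ) : Prop :=
  ∀ ⦃α : Type⦄ (f : α → G) (S : Multiset α), N ≤ card S →
    ∃ T ≤ S, T ≠ 0 ∧ card T ≤ e ∧ (T.map f).sum = 0

namespace HasShortZeroSum

variable {G : Type*} [AddCommMonoid G] {N e : ℕ}

theorem of_forall_card_eq
    (h : ∀ ⦃α : Type⦄ (f : α → G) (S : Multiset α), card S = N →
      ∃ T ≤ S, T ≠ 0 ∧ card T ≤ e ∧ (T.map f).sum = 0) :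
    HasShortZeroSum G N e := fun α f S hS => by
  obtain ⟨S₀, hS₀, rfl⟩ := exists_le_card_eq hS
  obtain ⟨T, hT, hT'⟩ := h f S₀ rfl
  exact ⟨T, hT.trans hS₀, hT'⟩

theorem of_subsingleton [Subsingleton G] : HasShortZeroSum G 1 1 := by
  intro α f S hS
  obtain ⟨x, hx⟩ := card_pos_iff_exists_mem.1 hS
  exact ⟨{x}, singleton_le.2 hx, singleton_ne_zero x, (card_singleton x).le,
    Subsingleton.elim _ _⟩

theorem exists_blocks (hG : HasShortZeroSum G N e) {α : Type} (f : α → G) (t : ℕ)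
    (S : Multiset α) (hS : N + t * e ≤ card S) :
    ∃ B : Fin (t + 1) → Multiset α, ∑ j, B j ≤ S ∧
      ∀ j, B j ≠ 0 ∧ card (B j) ≤ e ∧ ((B j).map f).sum = 0 := by
  induction t generalizing S with
  | zero =>
    obtain ⟨T, hTS, hT⟩ := hG f S (by simpa using hS)
    exact ⟨fun _ => T, by simpa using hTS, fun _ => hT⟩
  | succ t ih =>
    obtain ⟨T, hTS, hT⟩ := hG f S (by grind)
    obtain ⟨R, rfl⟩ := Multiset.le_iff_exists_add.1 hTS
    obtain ⟨B, hBR, hB⟩ := ih R (by rw [card_add] at hS; grind)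
    refine ⟨Fin.cons T B, ?_, Fin.cases hT hB⟩
    rw [Fin.sum_cons]
    exact add_le_add_right hBR T

theorem of_exact {Q K : Type*} [AddCommMonoid Q] [AddCommMonoid K] (π : G →+ Q) (ι : K →+ G)
    (hker : ∀ g, π g = 0 → ∃ k, ι k = g) {t e' : ℕ} (hQ : HasShortZeroSum Q N e)
    (hK : HasShortZeroSum K (t + 1) e') : HasShortZeroSum G (N + t * e) (e * e') := by
  intro α f S hS
  obtain ⟨B, hBS, hB⟩ := hQ.exists_blocks (π ∘ f) t S hS
  have hBker : ∀ j, ∃ k, ι k = ((B j).map f).sum := fun j =>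
    hker _ (by rw [map_multiset_sum, map_map]; exact (hB j).2.2)
  choose c hc using hBker
  obtain ⟨J, hJ, hJ0, hJcard, hJsum⟩ := hK c Finset.univ.val (by simp)
  refine ⟨J.bind B, ?_, ?_, ?_, ?_⟩
  · obtain ⟨R, hR⟩ := Multiset.le_iff_exists_add.1 hJ
    calc J.bind B ≤ J.bind B + R.bind B := le_self_add
      _ = ∑ j, B j := by rw [← add_bind, ← hR]; rfl
      _ ≤ S := hBS
  · obtain ⟨j, hj⟩ := exists_mem_of_ne_zero hJ0
    exact ne_bot_of_le_ne_bot (hB j).1 (le_bind J hj)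
  · calc card (J.bind B) = (J.map fun j => card (B j)).sum := card_bind J B
      _ ≤ card J * e := by
          simpa using sum_le_card_nsmul (J.map fun j => card (B j)) e
            (by simpa using fun j _ => (hB j).2.1)
      _ ≤ e * e' := by rw [mul_comm]; exact Nat.mul_le_mul_left e hJcard
  · calc ((J.bind B).map f).sum = (J.map fun j => ((B j).map f).sum).sum := by
          rw [map_bind, sum_bind]
      _ = ι (J.map c).sum := by rw [map_multiset_sum, map_map]; simp [hc]
      _ = 0 := by rw [hJsum, ι.map_zero]

end HasShortZeroSum

namespace ZMod

section Prime

variable {p : ℕ} [Fact p.Prime] {α : Type*}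

theorem exists_le_ne_zero_sum_map_eq_zero_of_two_mul_lt {f : α → ZMod p × ZMod p}
    {S : Multiset α} (hS : 2 * (p - 1) < Multiset.card S) :
    ∃ T ≤ S, T ≠ 0 ∧ (T.map f).sum = 0 := by
  obtain ⟨T, hTS, hT0, hT⟩ :=
    exists_le_ne_zero_forall_sum_map_eq_zero ![fun x => (f x).1, fun x => (f x).2] S (by simpa)
  exact ⟨T, hTS, hT0, sum_map_prod_eq_zero (hT 0) (hT 1)⟩

theorem exists_short_zero_sum_of_card_eq_two_mul {f : α → ZMod p × ZMod p}
    {T : Multiset α} (hT : Multiset.card T = 2 * p) (hsum : (T.map f).sum = 0) :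
    ∃ U ≤ T, U ≠ 0 ∧ Multiset.card U ≤ p ∧ (U.map f).sum = 0 := by
  classical
  have hp := (Fact.out : p.Prime).two_le
  obtain ⟨a, ha⟩ := card_pos_iff_exists_mem.1 (by omega : 0 < Multiset.card T)
  obtain ⟨U, hU, hU0, hUsum⟩ := exists_le_ne_zero_sum_map_eq_zero_of_two_mul_lt (f := f)
    (S := T.erase a) (by rw [card_erase_of_mem ha, hT, Nat.pred_eq_sub_one]; omega)
  have hUT : U ≤ T := hU.trans (erase_le a T)
  have hcardU : Multiset.card U < 2 * p := hT ▸ card_lt_card (hU.trans_lt (erase_lt.2 ha))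
  by_cases hUp : Multiset.card U ≤ p
  · exact ⟨U, hUT, hU0, hUp, hUsum⟩
  refine ⟨T - U, tsub_le_self, ?_, ?_, ?_⟩
  · rw [← card_pos, card_sub hUT]; omega
  · rw [card_sub hUT]; omega
  · rwa [← add_tsub_cancel_of_le hUT, Multiset.map_add, sum_add, hUsum, zero_add] at hsum

theorem hasShortZeroSum_prod_self_of_prime :
    HasShortZeroSum (ZMod p × ZMod p) (3 * p - 2) p := by
  refine HasShortZeroSum.of_forall_card_eq fun α f S hS => ?_
  have hp := (Fact.out : p.Prime).two_le
  -- the third form counts the terms, so the length of `T` is a multiple of `p`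
  obtain ⟨T, hTS, hT0, hT⟩ := exists_le_ne_zero_forall_sum_map_eq_zero
    ![fun x => (f x).1, fun x => (f x).2, 1] S (by simp; omega)
  have hsum : (T.map f).sum = 0 := sum_map_prod_eq_zero (hT 0) (hT 1)
  obtain ⟨c, hc⟩ : p ∣ Multiset.card T := by simpa [ZMod.natCast_eq_zero_iff] using hT 2
  have hTcard : Multiset.card T ≤ 3 * p - 2 := hS ▸ card_le_card hTS
  have hc0 : c ≠ 0 := by rintro rfl; simp_all
  obtain rfl | rfl : c = 1 ∨ c = 2 := by
    have : c < 3 := by by_contra! h; have := Nat.mul_le_mul_left p h; omega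
    omega
  · exact ⟨T, hTS, hT0, by omega, hsum⟩
  · obtain ⟨U, hUT, hU⟩ := exists_short_zero_sum_of_card_eq_two_mul (by rw [hc, mul_comm]) hsum
    exact ⟨U, hUT.trans hTS, hU⟩

end Prime

def mulLeftHom (a b : ℕ) : ZMod b →+ ZMod (a * b) :=
  ZMod.lift b ⟨(AddMonoidHom.mulLeft (a : ZMod (a * b))).comp (Int.castAddHom _),
    by simp [← Nat.cast_mul]⟩

theorem exists_mulLeftHom_eq_of_castHom_eq_zero {a b : ℕ} {x : ZMod (a * b)}
    (hx : castHom (dvd_mul_right a b) (ZMod a) x = 0) : ∃ y, mulLeftHom a b y = x := by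
  obtain ⟨z, rfl⟩ := ZMod.intCast_surjective x
  rw [map_intCast, ZMod.intCast_zmod_eq_zero_iff_dvd] at hx
  obtain ⟨w, rfl⟩ := hx
  exact ⟨w, by simp [mulLeftHom]⟩

theorem hasShortZeroSum_prod_self {n : ℕ} (hn : n ≠ 0) :
    HasShortZeroSum (ZMod n × ZMod n) (3 * n - 2) n := by
  induction n using Nat.prime_composite_induction with
  | zero => exact absurd rfl hn
  | one => exact HasShortZeroSum.of_subsingleton
  | prime p hp =>
    have := Fact.mk hp
    exact hasShortZeroSum_prod_self_of_prime
  | composite a ha iha b hb ihb =>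
    let π := (castHom (dvd_mul_right a b) (ZMod a)).toAddMonoidHom
    have hker : ∀ g, π.prodMap π g = 0 →
        ∃ k, (mulLeftHom a b).prodMap (mulLeftHom a b) k = g := by
      rintro ⟨x₁, x₂⟩ hx
      obtain ⟨y₁, rfl⟩ := exists_mulLeftHom_eq_of_castHom_eq_zero (congrArg Prod.fst hx)
      obtain ⟨y₂, rfl⟩ := exists_mulLeftHom_eq_of_castHom_eq_zero (congrArg Prod.snd hx)
      exact ⟨(y₁, y₂), rfl⟩
    have hb' : 3 * b - 2 = (3 * b - 3) + 1 := by omega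
    have hab : 3 * (a * b) - 2 = 3 * a - 2 + (3 * b - 3) * a := by
      have : (3 * b - 3) * a + 3 * a = 3 * (a * b) := by
        rw [← add_mul, Nat.sub_add_cancel (by omega)]; ring
      omega
    rw [hab]
    exact (iha (by omega)).of_exact _ _ hker (hb' ▸ ihb (by omega))

end ZMod

theorem stmt_17_general (m n k : ℕ) (hm : 2 ≤ m) (hn : 2 ≤ n)
    (φ : ZMod n × ZMod (m * n) → ZMod n × ZMod n)
    (S : Multiset (ZMod n × ZMod (m * n)))
    (hS : Multiset.card S = m * n + n - 2 + k) :
    ∃ (W : Multiset (ZMod n × ZMod (m * n)))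
      (Wf : Fin (m - 1) → Multiset (ZMod n × ZMod (m * n))),
      S = W + ∑ i, Wf i ∧
      ∀ i, 1 ≤ Multiset.card (Wf i) ∧ Multiset.card (Wf i) ≤ n ∧
        ((Wf i).map φ).sum = 0 := by
  obtain ⟨m, rfl⟩ : ∃ m', m = m' + 2 := ⟨m - 2, by omega⟩
  obtain ⟨W, hWS, hW⟩ := (ZMod.hasShortZeroSum_prod_self (by omega : n ≠ 0)).exists_blocks φ m S
    (by rw [hS, add_mul]; omega)
  exact ⟨S - ∑ i, W i, W, (tsub_add_cancel_of_le hWS).symm,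
    fun i => ⟨card_pos.2 (hW i).1, (hW i).2⟩⟩

theorem stmt_17 (m n k : ℕ) (hm : 2 ≤ m) (hn : 2 ≤ n) (hk : k ≤ n - 1)
    (φ : ZMod n × ZMod (m * n) → ZMod n × ZMod n)
    (hφ : φ = fun p => (p.1, ZMod.castHom (dvd_mul_left n m) (ZMod n) p.2))
    (S : Multiset (ZMod n × ZMod (m * n)))
    (hS : Multiset.card S = m * n + n - 2 + k) :
    ∃ (W : Multiset (ZMod n × ZMod (m * n)))
      (Wf : Fin (m - 1) → Multiset (ZMod n × ZMod (m * n))),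
      S = W + ∑ i, Wf i ∧
      ∀ i, 1 ≤ Multiset.card (Wf i) ∧ Multiset.card (Wf i) ≤ n ∧
        ((Wf i).map φ).sum = 0 :=
  stmt_17_general m n k hm hn φ S hS
end
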